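/- arXiv:1508.04302 — 6 statements merged into one kernel-verified Lean document; each statement's English description precedes it below -/
import Mathlib

section
/- For every group G, there exists a graph (V; E) such that G is isomorphic to the automorphism group Aut(V; E). -/
universe u
set_option linter.unusedSectionVars false
set_option linter.unusedVariables false
namespace Sab



/-- The order carrier: `G` followed by a copy of `ℕ`, so there is no maximum. -/
def O (G : Type u) : Type u := G ⊕ ULift.{u} ℕ

/-- well-order relation on ULift ℕ -/
def nlt : ULift.{u} ℕ → ULift.{u} ℕ → Prop := fun a b => a.down < b.down

instance : IsWellOrder (ULift.{u} ℕ) nlt where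
  trichotomous a b := by
    rcases Nat.lt_trichotomy a.down b.down with h | h | h
    · exact fun h1 _ => absurd h h1
    · exact fun _ _ => ULift.ext _ _ h
    · exact fun _ h2 => absurd h h2
  wf := InvImage.wf ULift.down (Nat.lt_wfRel.wf)

/-- The well-order on `O G`. -/
def OLT (G : Type u) : O G → O G → Prop := Sum.Lex (WellOrderingRel) nlt

instance {G : Type u} : IsWellOrder (O G) (OLT G) :=
  inferInstanceAs (IsWellOrder _ (Sum.Lex _ _))

lemma olt_trans {G : Type u} {a b c : O G} (h1 : OLT G a b) (h2 : OLT G b c) : OLT G a c :=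
  IsTrans.trans a b c h1 h2

lemma olt_irrefl {G : Type u} (a : O G) : ¬ OLT G a a := irrefl a

lemma olt_ne {G : Type u} {a b : O G} (h : OLT G a b) : a ≠ b := by
  rintro rfl; exact olt_irrefl a h

lemma exists_olt_gt {G : Type u} (a : O G) : ∃ b, OLT G a b := by
  cases a with
  | inl x => exact ⟨Sum.inr ⟨0⟩, Sum.Lex.sep _ _⟩
  | inr n => exact ⟨Sum.inr ⟨n.down + 1⟩, Sum.Lex.inr (Nat.lt_succ_self _)⟩

/-- ordered pairs -/
def OP (G : Type u) : Type u := {e : O G × O G // OLT G e.1 e.2}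

/-- The vertex type. -/
inductive Vx (G : Type u) : Type u
  | pt : G → Vx G
  | ea : G → G → Vx G
  | eb : G → G → Vx G
  | od : O G → Vx G
  | ga : OP G → Vx G
  | gb : OP G → Vx G
  | gq : OP G → Vx G

open Vx

variable {G : Type u} [Group G]

/-- base edges -/
inductive R : Vx G → Vx G → Prop
  | pa (x s : G) : R (pt x) (ea x s)
  | ab (x s : G) : R (ea x s) (eb x s)
  | bp (x s : G) : R (eb x s) (pt (x * s))
  | ac (x s : G) : R (ea x s) (od (Sum.inl s))
  | oa (e : OP G) : R (od e.1.1) (ga e)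
  | gab (e : OP G) : R (ga e) (gb e)
  | bo (e : OP G) : R (gb e) (od e.1.2)
  | bq (e : OP G) : R (gb e) (gq e)

/-- the graph -/
def graph (G : Type u) [Group G] : SimpleGraph (Vx G) where
  Adj u v := R u v ∨ R v u
  symm := ⟨fun u v h => h.symm⟩
  loopless := ⟨fun v h => by rcases h with h | h <;> cases h⟩

lemma adj_iff {u v : Vx G} : (graph G).Adj u v ↔ R u v ∨ R v u := Iff.rfl

lemma adj_gq (e : OP G) (u : Vx G) : (graph G).Adj (gq e) u ↔ u = gb e := by
  constructor
  · rintro (h | h) <;> cases h; rfl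
  · rintro rfl; exact Or.inr (R.bq e)

lemma adj_ga (e : OP G) (u : Vx G) :
    (graph G).Adj (ga e) u ↔ u = od e.1.1 ∨ u = gb e := by
  constructor
  · rintro (h | h) <;> cases h
    · exact Or.inr rfl
    · exact Or.inl rfl
  · rintro (rfl | rfl)
    · exact Or.inr (R.oa e)
    · exact Or.inl (R.gab e)

lemma adj_gb (e : OP G) (u : Vx G) :
    (graph G).Adj (gb e) u ↔ u = ga e ∨ u = od e.1.2 ∨ u = gq e := by
  constructor
  · rintro (h | h) <;> cases h
    · exact Or.inr (Or.inl rfl)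
    · exact Or.inr (Or.inr rfl)
    · exact Or.inl rfl
  · rintro (rfl | rfl | rfl)
    · exact Or.inr (R.gab e)
    · exact Or.inl (R.bo e)
    · exact Or.inl (R.bq e)

lemma adj_ea (x s : G) (u : Vx G) :
    (graph G).Adj (ea x s) u ↔ u = pt x ∨ u = eb x s ∨ u = od (Sum.inl s) := by
  constructor
  · rintro (h | h) <;> cases h
    · exact Or.inr (Or.inl rfl)
    · exact Or.inr (Or.inr rfl)
    · exact Or.inl rfl
  · rintro (rfl | rfl | rfl)
    · exact Or.inr (R.pa x s)
    · exact Or.inl (R.ab x s)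
    · exact Or.inl (R.ac x s)

lemma adj_eb (x s : G) (u : Vx G) :
    (graph G).Adj (eb x s) u ↔ u = ea x s ∨ u = pt (x * s) := by
  constructor
  · rintro (h | h) <;> cases h
    · exact Or.inr rfl
    · exact Or.inl rfl
  · rintro (rfl | rfl)
    · exact Or.inr (R.ab x s)
    · exact Or.inl (R.bp x s)

lemma adj_pt (x : G) (u : Vx G) :
    (graph G).Adj (pt x) u ↔ (∃ s, u = ea x s) ∨ (∃ y s, x = y * s ∧ u = eb y s) := by
  constructor
  · rintro (h | h) <;> cases h
    · exact Or.inl ⟨_, rfl⟩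
    · exact Or.inr ⟨_, _, rfl, rfl⟩
  · rintro (⟨s, rfl⟩ | ⟨y, s, rfl, rfl⟩)
    · exact Or.inl (R.pa x s)
    · exact Or.inr (R.bp y s)

lemma adj_od (α : O G) (u : Vx G) :
    (graph G).Adj (od α) u ↔ (∃ x s, α = Sum.inl s ∧ u = ea x s) ∨
      (∃ e : OP G, α = e.1.1 ∧ u = ga e) ∨ (∃ e : OP G, α = e.1.2 ∧ u = gb e) := by
  constructor
  · rintro (h | h) <;> cases h
    · exact Or.inr (Or.inl ⟨_, rfl, rfl⟩)
    · exact Or.inl ⟨_, _, rfl, rfl⟩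
    · exact Or.inr (Or.inr ⟨_, rfl, rfl⟩)
  · rintro (⟨x, s, rfl, rfl⟩ | ⟨e, rfl, rfl⟩ | ⟨e, rfl, rfl⟩)
    · exact Or.inr (R.ac x s)
    · exact Or.inl (R.oa e)
    · exact Or.inr (R.bo e)


section Preds
variable {V : Type*} {W : Type*} (Γ : SimpleGraph V)

/-- exactly one neighbour -/
def uqN (v : V) : Prop := ∃ w, ∀ u, Γ.Adj v u ↔ u = w

/-- exactly two neighbours -/
def twoN (v : V) : Prop := ∃ w₁ w₂, w₁ ≠ w₂ ∧ ∀ u, Γ.Adj v u ↔ u = w₁ ∨ u = w₂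

/-- exactly three neighbours -/
def threeN (v : V) : Prop :=
  ∃ w₁ w₂ w₃, w₁ ≠ w₂ ∧ w₁ ≠ w₃ ∧ w₂ ≠ w₃ ∧ ∀ u, Γ.Adj v u ↔ u = w₁ ∨ u = w₂ ∨ u = w₃

def bigN (v : V) : Prop := ¬ uqN Γ v ∧ ¬ twoN Γ v ∧ ¬ threeN Γ v

def flagN (v : V) : Prop := ∃ u, Γ.Adj v u ∧ uqN Γ u

def saN (v : V) : Prop := twoN Γ v ∧ ∃ u, Γ.Adj v u ∧ flagN Γ u

def sordN (v : V) : Prop := bigN Γ v ∧ ∃ u, Γ.Adj v u ∧ saN Γ u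

def sAN (v : V) : Prop := threeN Γ v ∧ ¬ flagN Γ v

def sBN (v : V) : Prop := twoN Γ v ∧ ¬ saN Γ v

def sPN (v : V) : Prop := bigN Γ v ∧ ¬ ∃ u, Γ.Adj v u ∧ saN Γ u

variable {Γ} {Δ : SimpleGraph W} (φ : Γ ≃g Δ)

lemma uqN_map {v : V} (h : uqN Γ v) : uqN Δ (φ v) := by
  obtain ⟨w, hw⟩ := h
  refine ⟨φ w, fun u => ?_⟩
  rw [← φ.apply_symm_apply u, φ.map_adj_iff, hw]
  exact φ.injective.eq_iff.symm

lemma twoN_map {v : V} (h : twoN Γ v) : twoN Δ (φ v) := by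
  obtain ⟨w₁, w₂, h12, hw⟩ := h
  refine ⟨φ w₁, φ w₂, by simpa using h12, fun u => ?_⟩
  rw [← φ.apply_symm_apply u, φ.map_adj_iff, hw, φ.injective.eq_iff, φ.injective.eq_iff]

lemma threeN_map {v : V} (h : threeN Γ v) : threeN Δ (φ v) := by
  obtain ⟨w₁, w₂, w₃, h12, h13, h23, hw⟩ := h
  refine ⟨φ w₁, φ w₂, φ w₃, by simpa using h12, by simpa using h13, by simpa using h23,
    fun u => ?_⟩
  rw [← φ.apply_symm_apply u, φ.map_adj_iff, hw, φ.injective.eq_iff, φ.injective.eq_iff,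
    φ.injective.eq_iff]

lemma bigN_map {v : V} (h : bigN Γ v) : bigN Δ (φ v) := by
  refine ⟨fun hc => h.1 ?_, fun hc => h.2.1 ?_, fun hc => h.2.2 ?_⟩
  · simpa using uqN_map φ.symm hc
  · simpa using twoN_map φ.symm hc
  · simpa using threeN_map φ.symm hc

lemma flagN_map {v : V} (h : flagN Γ v) : flagN Δ (φ v) := by
  obtain ⟨u, hadj, huq⟩ := h
  exact ⟨φ u, φ.map_adj_iff.2 hadj, uqN_map φ huq⟩

lemma not_flagN_map {v : V} (h : ¬ flagN Γ v) : ¬ flagN Δ (φ v) := fun hc => by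
  have := flagN_map φ.symm hc; simp at this; exact h this

lemma saN_map {v : V} (h : saN Γ v) : saN Δ (φ v) := by
  obtain ⟨h2, u, hadj, hf⟩ := h
  exact ⟨twoN_map φ h2, φ u, φ.map_adj_iff.2 hadj, flagN_map φ hf⟩

lemma sordN_map {v : V} (h : sordN Γ v) : sordN Δ (φ v) := by
  obtain ⟨hb, u, hadj, hs⟩ := h
  exact ⟨bigN_map φ hb, φ u, φ.map_adj_iff.2 hadj, saN_map φ hs⟩

lemma sAN_map {v : V} (h : sAN Γ v) : sAN Δ (φ v) :=
  ⟨threeN_map φ h.1, not_flagN_map φ h.2⟩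

lemma sBN_map {v : V} (h : sBN Γ v) : sBN Δ (φ v) := by
  refine ⟨twoN_map φ h.1, fun hc => h.2 ?_⟩
  have := saN_map φ.symm hc; simpa using this

lemma sPN_map {v : V} (h : sPN Γ v) : sPN Δ (φ v) := by
  refine ⟨bigN_map φ h.1, fun ⟨u, hadj, hs⟩ => h.2 ?_⟩
  refine ⟨φ.symm u, ?_, ?_⟩
  · have := φ.symm.map_adj_iff.2 hadj; simpa using this
  · exact saN_map φ.symm hs

/-! pigeonhole helpers -/

lemma not_uqN_of_two {v a b : V} (hab : a ≠ b) (ha : Γ.Adj v a) (hb : Γ.Adj v b) :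
    ¬ uqN Γ v := by
  rintro ⟨w, hw⟩
  rcases (hw a).1 ha with rfl
  rcases (hw b).1 hb with rfl
  exact hab rfl

lemma not_twoN_of_three {v a b c : V} (hab : a ≠ b) (hac : a ≠ c) (hbc : b ≠ c)
    (ha : Γ.Adj v a) (hb : Γ.Adj v b) (hc : Γ.Adj v c) : ¬ twoN Γ v := by
  rintro ⟨w₁, w₂, h12, hw⟩
  rcases (hw a).1 ha with rfl | rfl <;> rcases (hw b).1 hb with rfl | rfl <;>
    rcases (hw c).1 hc with rfl | rfl <;> simp_all

lemma not_threeN_of_four {v a b c d : V} (hab : a ≠ b) (hac : a ≠ c) (had : a ≠ d)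
    (hbc : b ≠ c) (hbd : b ≠ d) (hcd : c ≠ d)
    (ha : Γ.Adj v a) (hb : Γ.Adj v b) (hc : Γ.Adj v c) (hd : Γ.Adj v d) : ¬ threeN Γ v := by
  rintro ⟨w₁, w₂, w₃, h12, h13, h23, hw⟩
  rcases (hw a).1 ha with rfl | rfl | rfl <;> rcases (hw b).1 hb with rfl | rfl | rfl <;>
    rcases (hw c).1 hc with rfl | rfl | rfl <;> rcases (hw d).1 hd with rfl | rfl | rfl <;>
      simp_all

lemma bigN_of_four {v a b c d : V} (hab : a ≠ b) (hac : a ≠ c) (had : a ≠ d)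
    (hbc : b ≠ c) (hbd : b ≠ d) (hcd : c ≠ d)
    (ha : Γ.Adj v a) (hb : Γ.Adj v b) (hc : Γ.Adj v c) (hd : Γ.Adj v d) : bigN Γ v :=
  ⟨not_uqN_of_two hab ha hb, not_twoN_of_three hab hac hbc ha hb hc,
    not_threeN_of_four hab hac had hbc hbd hcd ha hb hc hd⟩

/-- all neighbours equal to a single vertex: not two, not three -/
lemma not_twoN_of_sub1 {v p : V} (h : ∀ u, Γ.Adj v u → u = p) : ¬ twoN Γ v := by
  rintro ⟨w₁, w₂, h12, hw⟩
  have h1 := h w₁ ((hw w₁).2 (Or.inl rfl))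
  have h2 := h w₂ ((hw w₂).2 (Or.inr rfl))
  exact h12 (h1.trans h2.symm)

lemma not_threeN_of_sub1 {v p : V} (h : ∀ u, Γ.Adj v u → u = p) : ¬ threeN Γ v := by
  rintro ⟨w₁, w₂, w₃, h12, h13, h23, hw⟩
  have h1 := h w₁ ((hw w₁).2 (Or.inl rfl))
  have h2 := h w₂ ((hw w₂).2 (Or.inr (Or.inl rfl)))
  exact h12 (h1.trans h2.symm)

lemma not_threeN_of_sub2 {v p q : V} (h : ∀ u, Γ.Adj v u → u = p ∨ u = q) : ¬ threeN Γ v := by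
  rintro ⟨w₁, w₂, w₃, h12, h13, h23, hw⟩
  have h1 := h w₁ ((hw w₁).2 (Or.inl rfl))
  have h2 := h w₂ ((hw w₂).2 (Or.inr (Or.inl rfl)))
  have h3 := h w₃ ((hw w₃).2 (Or.inr (Or.inr rfl)))
  rcases h1 with rfl | rfl <;> rcases h2 with rfl | rfl <;> rcases h3 with rfl | rfl <;> simp_all

end Preds
open Vx

variable {G : Type u} [Group G] [Nontrivial G]

/-! ### positive facts -/

lemma uq_gq (e : OP G) : uqN (graph G) (gq e) := ⟨gb e, adj_gq e⟩

lemma two_eb (x s : G) : twoN (graph G) (eb x s) :=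
  ⟨ea x s, pt (x * s), by simp, adj_eb x s⟩

lemma two_ga (e : OP G) : twoN (graph G) (ga e) :=
  ⟨od e.1.1, gb e, by simp, adj_ga e⟩

lemma three_ea (x s : G) : threeN (graph G) (ea x s) :=
  ⟨pt x, eb x s, od (Sum.inl s), by simp, by simp, by simp, adj_ea x s⟩

lemma three_gb (e : OP G) : threeN (graph G) (gb e) :=
  ⟨ga e, od e.1.2, gq e, by simp, by simp, by simp, adj_gb e⟩

lemma big_pt (x : G) : bigN (graph G) (pt x) := by
  obtain ⟨s0, hs0⟩ := exists_ne (1 : G)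
  refine bigN_of_four (a := ea x 1) (b := ea x s0) (c := eb x 1) (d := eb (x * s0⁻¹) s0)
    ?_ ?_ ?_ ?_ ?_ ?_ ?_ ?_ ?_ ?_
  · simp [hs0.symm]
  · simp
  · simp
  · simp
  · simp
  · simp [hs0.symm]
  · exact (adj_pt x _).2 (Or.inl ⟨1, rfl⟩)
  · exact (adj_pt x _).2 (Or.inl ⟨s0, rfl⟩)
  · exact (adj_pt x _).2 (Or.inr ⟨x, 1, (mul_one x).symm, rfl⟩)
  · exact (adj_pt x _).2 (Or.inr ⟨x * s0⁻¹, s0, (inv_mul_cancel_right x s0).symm, rfl⟩)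

/-- a strictly increasing chain of length 4 above any `α` -/
lemma chain4 (α : O G) : ∃ β₁ β₂ β₃ β₄ : O G,
    OLT G α β₁ ∧ OLT G α β₂ ∧ OLT G α β₃ ∧ OLT G α β₄ ∧
      β₁ ≠ β₂ ∧ β₁ ≠ β₃ ∧ β₁ ≠ β₄ ∧ β₂ ≠ β₃ ∧ β₂ ≠ β₄ ∧ β₃ ≠ β₄ := by
  obtain ⟨β₁, h1⟩ := exists_olt_gt α
  obtain ⟨β₂, h2⟩ := exists_olt_gt β₁
  obtain ⟨β₃, h3⟩ := exists_olt_gt β₂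
  obtain ⟨β₄, h4⟩ := exists_olt_gt β₃
  exact ⟨β₁, β₂, β₃, β₄, h1, olt_trans h1 h2, olt_trans h1 (olt_trans h2 h3),
    olt_trans h1 (olt_trans h2 (olt_trans h3 h4)),
    olt_ne h2, olt_ne (olt_trans h2 h3), olt_ne (olt_trans h2 (olt_trans h3 h4)),
    olt_ne h3, olt_ne (olt_trans h3 h4), olt_ne h4⟩

lemma ga_ne {e₁ e₂ : OP G} (h : e₁.1.2 ≠ e₂.1.2) : (ga e₁ : Vx G) ≠ ga e₂ :=
  fun hh => h (by rw [Vx.ga.inj hh])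

lemma adj_od_ga (α : O G) {β : O G} (h : OLT G α β) :
    (graph G).Adj (od α) (ga ⟨(α, β), h⟩) :=
  (adj_od α _).2 (Or.inr (Or.inl ⟨⟨(α, β), h⟩, rfl, rfl⟩))

lemma big_od (α : O G) : bigN (graph G) (od α) := by
  obtain ⟨β₁, β₂, β₃, β₄, h1, h2, h3, h4, n12, n13, n14, n23, n24, n34⟩ := chain4 α
  exact bigN_of_four (ga_ne n12) (ga_ne n13) (ga_ne n14) (ga_ne n23) (ga_ne n24) (ga_ne n34)
    (adj_od_ga α h1) (adj_od_ga α h2) (adj_od_ga α h3) (adj_od_ga α h4)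

/-! ### negative uq facts -/

lemma not_uq_pt (x : G) : ¬ uqN (graph G) (pt x) := by
  have h := big_pt x; exact h.1

lemma not_uq_od (α : O G) : ¬ uqN (graph G) (od α) := (big_od α).1

lemma not_uq_of_two' {v : Vx G} (h : twoN (graph G) v) : ¬ uqN (graph G) v := by
  obtain ⟨w₁, w₂, h12, hw⟩ := h
  exact not_uqN_of_two h12 ((hw w₁).2 (Or.inl rfl)) ((hw w₂).2 (Or.inr rfl))

lemma not_uq_of_three' {v : Vx G} (h : threeN (graph G) v) : ¬ uqN (graph G) v := by
  obtain ⟨w₁, w₂, w₃, h12, h13, h23, hw⟩ := h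
  exact not_uqN_of_two h12 ((hw w₁).2 (Or.inl rfl)) ((hw w₂).2 (Or.inr (Or.inl rfl)))

lemma not_uq_ea (x s : G) : ¬ uqN (graph G) (ea x s) := not_uq_of_three' (three_ea x s)
lemma not_uq_eb (x s : G) : ¬ uqN (graph G) (eb x s) := not_uq_of_two' (two_eb x s)
lemma not_uq_ga (e : OP G) : ¬ uqN (graph G) (ga e) := not_uq_of_two' (two_ga e)
lemma not_uq_gb (e : OP G) : ¬ uqN (graph G) (gb e) := not_uq_of_three' (three_gb e)

/-! ### negative two/three facts -/

lemma not_two_of_three' {v : Vx G} (h : threeN (graph G) v) : ¬ twoN (graph G) v := by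
  obtain ⟨w₁, w₂, w₃, h12, h13, h23, hw⟩ := h
  exact not_twoN_of_three h12 h13 h23 ((hw w₁).2 (Or.inl rfl))
    ((hw w₂).2 (Or.inr (Or.inl rfl))) ((hw w₃).2 (Or.inr (Or.inr rfl)))

lemma not_two_gq (e : OP G) : ¬ twoN (graph G) (gq e) :=
  not_twoN_of_sub1 (fun u h => (adj_gq e u).1 h)

lemma not_three_gq (e : OP G) : ¬ threeN (graph G) (gq e) :=
  not_threeN_of_sub1 (fun u h => (adj_gq e u).1 h)

lemma not_three_eb (x s : G) : ¬ threeN (graph G) (eb x s) :=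
  not_threeN_of_sub2 (fun u h => (adj_eb x s u).1 h)

lemma not_three_ga (e : OP G) : ¬ threeN (graph G) (ga e) :=
  not_threeN_of_sub2 (fun u h => (adj_ga e u).1 h)

/-! ### flag facts -/

lemma flag_gb (e : OP G) : flagN (graph G) (gb e) :=
  ⟨gq e, (adj_gb e _).2 (Or.inr (Or.inr rfl)), uq_gq e⟩

lemma not_flag_pt (x : G) : ¬ flagN (graph G) (pt x) := by
  rintro ⟨u, hadj, huq⟩
  rcases (adj_pt x u).1 hadj with ⟨s, rfl⟩ | ⟨y, s, -, rfl⟩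
  · exact not_uq_ea x s huq
  · exact not_uq_eb y s huq

lemma not_flag_ea (x s : G) : ¬ flagN (graph G) (ea x s) := by
  rintro ⟨u, hadj, huq⟩
  rcases (adj_ea x s u).1 hadj with rfl | rfl | rfl
  · exact not_uq_pt x huq
  · exact not_uq_eb x s huq
  · exact not_uq_od _ huq

lemma not_flag_eb (x s : G) : ¬ flagN (graph G) (eb x s) := by
  rintro ⟨u, hadj, huq⟩
  rcases (adj_eb x s u).1 hadj with rfl | rfl
  · exact not_uq_ea x s huq
  · exact not_uq_pt _ huq

lemma not_flag_od (α : O G) : ¬ flagN (graph G) (od α) := by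
  rintro ⟨u, hadj, huq⟩
  rcases (adj_od α u).1 hadj with ⟨x, s, -, rfl⟩ | ⟨e, -, rfl⟩ | ⟨e, -, rfl⟩
  · exact not_uq_ea x s huq
  · exact not_uq_ga e huq
  · exact not_uq_gb e huq

lemma not_flag_ga (e : OP G) : ¬ flagN (graph G) (ga e) := by
  rintro ⟨u, hadj, huq⟩
  rcases (adj_ga e u).1 hadj with rfl | rfl
  · exact not_uq_od _ huq
  · exact not_uq_gb e huq

/-! ### sa facts -/

lemma sa_ga (e : OP G) : saN (graph G) (ga e) :=
  ⟨two_ga e, gb e, (adj_ga e _).2 (Or.inr rfl), flag_gb e⟩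

lemma not_sa_eb (x s : G) : ¬ saN (graph G) (eb x s) := by
  rintro ⟨-, u, hadj, hf⟩
  rcases (adj_eb x s u).1 hadj with rfl | rfl
  · exact not_flag_ea x s hf
  · exact not_flag_pt _ hf

/-! ### sord / sP facts -/

lemma sord_od (α : O G) : sordN (graph G) (od α) := by
  obtain ⟨β, hβ⟩ := exists_olt_gt α
  exact ⟨big_od α, ga ⟨(α, β), hβ⟩, adj_od_ga α hβ, sa_ga _⟩

lemma sP_pt (x : G) : sPN (graph G) (pt x) := by
  refine ⟨big_pt x, ?_⟩
  rintro ⟨u, hadj, hs⟩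
  rcases (adj_pt x u).1 hadj with ⟨s, rfl⟩ | ⟨y, s, -, rfl⟩
  · exact not_two_of_three' (three_ea x s) hs.1
  · exact not_sa_eb y s hs

lemma sA_ea (x s : G) : sAN (graph G) (ea x s) := ⟨three_ea x s, not_flag_ea x s⟩

lemma sB_eb (x s : G) : sBN (graph G) (eb x s) := ⟨two_eb x s, not_sa_eb x s⟩

/-! ### classification -/

lemma uq_class {v : Vx G} (h : uqN (graph G) v) : ∃ e, v = gq e := by
  cases v with
  | pt x => exact absurd h (not_uq_pt x)
  | ea x s => exact absurd h (not_uq_ea x s)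
  | eb x s => exact absurd h (not_uq_eb x s)
  | od α => exact absurd h (not_uq_od α)
  | ga e => exact absurd h (not_uq_ga e)
  | gb e => exact absurd h (not_uq_gb e)
  | gq e => exact ⟨e, rfl⟩

lemma two_class {v : Vx G} (h : twoN (graph G) v) :
    (∃ x s, v = eb x s) ∨ ∃ e, v = ga e := by
  cases v with
  | pt x => exact absurd h (big_pt x).2.1
  | ea x s => exact absurd h (not_two_of_three' (three_ea x s))
  | eb x s => exact Or.inl ⟨x, s, rfl⟩
  | od α => exact absurd h (big_od α).2.1
  | ga e => exact Or.inr ⟨e, rfl⟩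
  | gb e => exact absurd h (not_two_of_three' (three_gb e))
  | gq e => exact absurd h (not_two_gq e)

lemma three_class {v : Vx G} (h : threeN (graph G) v) :
    (∃ x s, v = ea x s) ∨ ∃ e, v = gb e := by
  cases v with
  | pt x => exact absurd h (big_pt x).2.2
  | ea x s => exact Or.inl ⟨x, s, rfl⟩
  | eb x s => exact absurd h (not_three_eb x s)
  | od α => exact absurd h (big_od α).2.2
  | ga e => exact absurd h (not_three_ga e)
  | gb e => exact Or.inr ⟨e, rfl⟩
  | gq e => exact absurd h (not_three_gq e)

lemma big_class {v : Vx G} (h : bigN (graph G) v) :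
    (∃ x, v = pt x) ∨ ∃ α, v = od α := by
  cases v with
  | pt x => exact Or.inl ⟨x, rfl⟩
  | ea x s => exact absurd (three_ea x s) h.2.2
  | eb x s => exact absurd (two_eb x s) h.2.1
  | od α => exact Or.inr ⟨α, rfl⟩
  | ga e => exact absurd (two_ga e) h.2.1
  | gb e => exact absurd (three_gb e) h.2.2
  | gq e => exact absurd (uq_gq e) h.1

lemma flag_class {v : Vx G} (h : flagN (graph G) v) : ∃ e, v = gb e := by
  obtain ⟨u, hadj, huq⟩ := h
  obtain ⟨e, rfl⟩ := uq_class huq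
  exact ⟨e, ((adj_gq e v).1 hadj.symm)⟩

lemma sa_class {v : Vx G} (h : saN (graph G) v) : ∃ e, v = ga e := by
  rcases two_class h.1 with ⟨x, s, rfl⟩ | he
  · exact absurd h (not_sa_eb x s)
  · exact he

lemma sA_class {v : Vx G} (h : sAN (graph G) v) : ∃ x s, v = ea x s := by
  rcases three_class h.1 with he | ⟨e, rfl⟩
  · exact he
  · exact absurd (flag_gb e) h.2

lemma sB_class {v : Vx G} (h : sBN (graph G) v) : ∃ x s, v = eb x s := by
  rcases two_class h.1 with he | ⟨e, rfl⟩
  · exact he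
  · exact absurd (sa_ga e) h.2

lemma sord_class {v : Vx G} (h : sordN (graph G) v) : ∃ α, v = od α := by
  rcases big_class h.1 with ⟨x, rfl⟩ | hα
  · exact absurd h.2 (sP_pt x).2
  · exact hα

lemma sP_class {v : Vx G} (h : sPN (graph G) v) : ∃ x, v = pt x := by
  rcases big_class h.1 with hx | ⟨α, rfl⟩
  · exact hx
  · exact absurd (sord_od α).2 h.2

section Rigid
variable {G : Type u} [Group G] [Nontrivial G] (φ : graph G ≃g graph G)

open Vx

/-- the map induced on the order part -/
noncomputable def odm (α : O G) : O G := (sord_class (sordN_map φ (sord_od α))).choose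

lemma odm_spec (α : O G) : φ (od α) = od (odm φ α) :=
  (sord_class (sordN_map φ (sord_od α))).choose_spec

lemma gadget_chase (e : OP G) : ∃ e' : OP G, φ (ga e) = ga e' ∧ φ (gb e) = gb e' ∧
    odm φ e.1.1 = e'.1.1 ∧ odm φ e.1.2 = e'.1.2 := by
  obtain ⟨e', hga⟩ := sa_class (saN_map φ (sa_ga e))
  have h1 : (graph G).Adj (ga e') (od (odm φ e.1.1)) := by
    rw [← odm_spec, ← hga]
    exact (φ.map_adj_iff.2 (Or.inl (R.oa e))).symm
  have h1' : odm φ e.1.1 = e'.1.1 := by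
    rcases (adj_ga e' _).1 h1 with h | h
    · exact Vx.od.inj h
    · simp at h
  have hgb : φ (gb e) = gb e' := by
    have h2 : (graph G).Adj (ga e') (φ (gb e)) := by
      rw [← hga]; exact φ.map_adj_iff.2 (Or.inl (R.gab e))
    rcases (adj_ga e' _).1 h2 with h | h
    · exfalso
      have hf := flagN_map φ (flag_gb e)
      rw [h] at hf
      exact not_flag_od _ hf
    · exact h
  have h3 : odm φ e.1.2 = e'.1.2 := by
    have hh : (graph G).Adj (gb e') (od (odm φ e.1.2)) := by
      rw [← hgb, ← odm_spec]
      exact φ.map_adj_iff.2 (Or.inl (R.bo e))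
    rcases (adj_gb e' _).1 hh with h | h | h
    · simp at h
    · exact Vx.od.inj h
    · simp at h
  exact ⟨e', hga, hgb, h1', h3⟩

lemma odm_mono {α β : O G} (h : OLT G α β) : OLT G (odm φ α) (odm φ β) := by
  obtain ⟨e', -, -, h1, h2⟩ := gadget_chase φ ⟨(α, β), h⟩
  rw [show odm φ α = e'.1.1 from h1, show odm φ β = e'.1.2 from h2]
  exact e'.2

lemma odm_comp (α : O G) : odm φ.symm (odm φ α) = α := by
  apply Vx.od.inj (G := G)
  rw [← odm_spec, ← odm_spec, φ.symm_apply_apply]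

lemma odm_inj : Function.Injective (odm φ) := fun a b hab => by
  rw [← odm_comp φ a, hab, odm_comp]

lemma odm_id (α : O G) : odm φ α = α := by
  refine (IsWellFounded.wf (α := O G) (r := OLT G)).induction
    (C := fun α => odm φ α = α) α ?_
  intro α IH
  rcases trichotomous_of (OLT G) (odm φ α) α with h | h | h
  · exact odm_inj φ (IH _ h)
  · exact h
  · exfalso
    have hcomp : odm φ (odm φ.symm α) = α := odm_comp φ.symm α
    set β := odm φ.symm α with hβ
    rcases trichotomous_of (OLT G) β α with hb | hb | hb
    · have := IH β hb
      rw [this] at hcomp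
      exact olt_ne hb hcomp
    · rw [hb] at hcomp
      rw [hcomp] at h
      exact olt_irrefl α h
    · have := odm_mono φ hb
      rw [hcomp] at this
      exact olt_irrefl α (olt_trans h this)

lemma phi_od (α : O G) : φ (od α) = od α := by rw [odm_spec, odm_id]

lemma phi_gagb (e : OP G) : φ (ga e) = ga e ∧ φ (gb e) = gb e := by
  obtain ⟨e', hga, hgb, h1, h2⟩ := gadget_chase φ e
  rw [odm_id] at h1 h2
  have : e = e' := Subtype.ext (Prod.ext h1 h2)
  rw [← this] at hga hgb
  exact ⟨hga, hgb⟩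

lemma phi_gq (e : OP G) : φ (gq e) = gq e := by
  have hadj : (graph G).Adj (gb e) (φ (gq e)) := by
    rw [← (phi_gagb φ e).2]
    exact φ.map_adj_iff.2 (Or.inl (R.bq e))
  have huq := uqN_map φ (uq_gq e)
  rcases (adj_gb e _).1 hadj with h | h | h
  · rw [h] at huq; exact absurd huq (not_uq_ga e)
  · rw [h] at huq; exact absurd huq (not_uq_od _)
  · exact h

/-- the map induced on points -/
noncomputable def pm (x : G) : G := (sP_class (sPN_map φ (sP_pt x))).choose

lemma pm_spec (x : G) : φ (pt x) = pt (pm φ x) :=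
  (sP_class (sPN_map φ (sP_pt x))).choose_spec

lemma phi_ea (x s : G) : φ (ea x s) = ea (pm φ x) s := by
  obtain ⟨y, t, h⟩ := sA_class (sAN_map φ (sA_ea x s))
  have h1 : (graph G).Adj (ea y t) (pt (pm φ x)) := by
    rw [← h, ← pm_spec]
    exact (φ.map_adj_iff.2 (Or.inl (R.pa x s))).symm
  have hy : y = pm φ x := by
    rcases (adj_ea y t _).1 h1 with hh | hh | hh
    · exact (Vx.pt.inj hh).symm
    · simp at hh
    · simp at hh
  have h2 : (graph G).Adj (ea y t) (od (Sum.inl s)) := by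
    rw [← h, ← phi_od φ (Sum.inl s)]
    exact φ.map_adj_iff.2 (Or.inl (R.ac x s))
  have ht : t = s := by
    rcases (adj_ea y t _).1 h2 with hh | hh | hh
    · simp at hh
    · simp at hh
    · exact (Sum.inl.inj (Vx.od.inj hh)).symm
  rw [h, hy, ht]

lemma phi_eb (x s : G) : φ (eb x s) = eb (pm φ x) s := by
  obtain ⟨y, t, h⟩ := sB_class (sBN_map φ (sB_eb x s))
  have h1 : (graph G).Adj (ea (pm φ x) s) (eb y t) := by
    rw [← phi_ea, ← h]
    exact φ.map_adj_iff.2 (Or.inl (R.ab x s))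
  rcases (adj_ea _ _ _).1 h1 with hh | hh | hh
  · simp at hh
  · rw [h, hh]
  · simp at hh

lemma pm_mul (x s : G) : pm φ (x * s) = pm φ x * s := by
  have h1 : (graph G).Adj (eb (pm φ x) s) (pt (pm φ (x * s))) := by
    rw [← phi_eb, ← pm_spec]
    exact φ.map_adj_iff.2 (Or.inl (R.bp x s))
  rcases (adj_eb _ _ _).1 h1 with hh | hh
  · simp at hh
  · exact Vx.pt.inj hh

end Rigid
section Build
variable {G : Type u} [Group G]
open Vx

/-- left translation on vertices -/
def T (g : G) : Vx G → Vx G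
  | pt x => pt (g * x)
  | ea x s => ea (g * x) s
  | eb x s => eb (g * x) s
  | od α => od α
  | ga e => ga e
  | gb e => gb e
  | gq e => gq e

lemma RT (g : G) {u v : Vx G} (h : R u v) : R (T g u) (T g v) := by
  cases h with
  | pa x s => exact R.pa (g * x) s
  | ab x s => exact R.ab (g * x) s
  | bp x s =>
      show R (eb (g * x) s) (pt (g * (x * s)))
      rw [← mul_assoc]
      exact R.bp (g * x) s
  | ac x s => exact R.ac (g * x) s
  | oa e => exact R.oa e
  | gab e => exact R.gab e
  | bo e => exact R.bo e
  | bq e => exact R.bq e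

lemma T_comp (g : G) (v : Vx G) : T g⁻¹ (T g v) = v := by
  cases v <;> simp [T, inv_mul_cancel_left]

/-- left translation as an automorphism -/
def mOf (g : G) : graph G ≃g graph G where
  toFun := T g
  invFun := T g⁻¹
  left_inv := T_comp g
  right_inv := fun v => by have := T_comp g⁻¹ v; rwa [inv_inv] at this
  map_rel_iff' := by
    intro u v
    show (graph G).Adj (T g u) (T g v) ↔ (graph G).Adj u v
    constructor
    · rintro (h | h)
      · have := RT g⁻¹ h
        rw [T_comp, T_comp] at this
        exact Or.inl this
      · have := RT g⁻¹ h
        rw [T_comp, T_comp] at this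
        exact Or.inr this
    · rintro (h | h)
      · exact Or.inl (RT g h)
      · exact Or.inr (RT g h)

lemma mOf_apply (g : G) (v : Vx G) : mOf g v = T g v := rfl

/-- the homomorphism `G →* Aut` -/
def Φ : G →* (graph G ≃g graph G) where
  toFun := mOf
  map_one' := by
    apply RelIso.ext
    intro v
    cases v <;> simp [mOf_apply, T]
  map_mul' g h := by
    apply RelIso.ext
    intro v
    have : (mOf g * mOf h) v = mOf g (mOf h v) := rfl
    rw [this]
    cases v <;> simp [mOf_apply, T, mul_assoc]

lemma Φ_inj : Function.Injective (Φ : G →* (graph G ≃g graph G)) := by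
  intro g h hg
  have := DFunLike.congr_fun (congrArg (fun (ψ : graph G ≃g graph G) => ψ.toEquiv) hg) (pt 1)
  change (pt (g * 1) : Vx G) = pt (h * 1) at this
  have := Vx.pt.inj this
  simpa using this

lemma Φ_surj [Nontrivial G] : Function.Surjective (Φ : G →* (graph G ≃g graph G)) := by
  intro φ
  refine ⟨pm φ 1, ?_⟩
  have hpm : ∀ x, pm φ x = pm φ 1 * x := by
    intro x
    have := pm_mul φ 1 x
    rwa [one_mul] at this
  apply RelIso.ext
  intro v
  cases v with
  | pt x => rw [show (Φ (pm φ 1)) (pt x) = pt (pm φ 1 * x) from rfl, ← hpm, pm_spec]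
  | ea x s => rw [show (Φ (pm φ 1)) (ea x s) = ea (pm φ 1 * x) s from rfl, ← hpm, phi_ea]
  | eb x s => rw [show (Φ (pm φ 1)) (eb x s) = eb (pm φ 1 * x) s from rfl, ← hpm, phi_eb]
  | od α => rw [show (Φ (pm φ 1)) (od α) = od α from rfl, phi_od]
  | ga e => rw [show (Φ (pm φ 1)) (ga e) = ga e from rfl, (phi_gagb φ e).1]
  | gb e => rw [show (Φ (pm φ 1)) (gb e) = gb e from rfl, (phi_gagb φ e).2]
  | gq e => rw [show (Φ (pm φ 1)) (gq e) = gq e from rfl, phi_gq]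

end Build
end Sab

/-- **Sabidussi's theorem.** For every group `G`, there exists a graph `(V; E)`
(a nonempty vertex set with a symmetric irreflexive adjacency relation, i.e. a
simple graph) such that `G` is isomorphic to the automorphism group of the graph. -/
theorem group_is_graph_automorphism_group (G : Type u) [Group G] :
    ∃ (V : Type u) (_ : Nonempty V) (Γ : SimpleGraph V),
      Nonempty (G ≃* (Γ ≃g Γ)) := by
  rcases subsingleton_or_nontrivial G with hs | hn
  · refine ⟨PUnit.{u+1}, ⟨⟨⟩⟩, ⊥, ⟨?_⟩⟩
    haveI : Subsingleton ((⊥ : SimpleGraph PUnit.{u+1}) ≃g (⊥ : SimpleGraph PUnit.{u+1})) :=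
      ⟨fun a b => RelIso.ext fun v => Subsingleton.elim (a v) (b v)⟩
    have e : G ≃* ((⊥ : SimpleGraph PUnit.{u+1}) ≃g (⊥ : SimpleGraph PUnit.{u+1})) :=
      { toFun := fun _ => 1
        invFun := fun _ => 1
        left_inv := fun a => Subsingleton.elim _ _
        right_inv := fun a => Subsingleton.elim _ _
        map_mul' := fun _ _ => Subsingleton.elim _ _ }
    exact e
  · exact ⟨Sab.Vx G, ⟨Sab.Vx.pt 1⟩, Sab.graph G,
      ⟨MulEquiv.ofBijective Sab.Φ ⟨Sab.Φ_inj, Sab.Φ_surj⟩⟩⟩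
end

section
/- For every finite group G, there exists a finite graph (V; E) such that G is isomorphic to the automorphism group Aut(V; E). -/
/-!
Frucht's construction. Colour the arc `g → h` of the complete digraph on `G` by `g⁻¹ * h`; the
colour-preserving automorphisms of this digraph are exactly the left translations. To get a
simple graph, replace each arc `(g, h)` (loops included) by a path of `L` new vertices from `g`
to `h` and hang a leaf on its vertex at distance `pos (g⁻¹ * h) + 1` from `g`. Valencies tell the
group vertices (at least `2 |G| ≥ 4`), the path vertices (2 or 3) and the leaves (1) apart, so an
automorphism maps each path onto a path. As `pos s + pos t + 1 < L`, no leaf position is the mirror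
image of another, so the path keeps its orientation, and as `pos` is injective, its colour. An
automorphism sending `1` to `t` therefore sends every `g` to `t * g`, and it is the translation
by `t`.

For the trivial group the construction gives a cycle with one pendant leaf, which has a
reflection, so that case uses the one-vertex graph instead.
-/

universe u

namespace SimpleGraph.Iso

variable {V W : Type*} {G : SimpleGraph V} {H : SimpleGraph W}

theorem encard_neighborSet (φ : G ≃g H) (v : V) :
    (H.neighborSet (φ v)).encard = (G.neighborSet v).encard :=
  (Set.encard_congr (φ.toEquiv.subtypeEquiv fun _ => φ.map_adj_iff.symm)).symm

theorem apply_path_eq (φ : G ≃g H) {S : Set W} {x : ℕ → V} {y : ℕ → W} {N : ℕ}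
    (hx : ∀ k, k + 2 ≤ N →
      G.Adj (x (k + 1)) (x (k + 2)) ∧ x (k + 2) ≠ x k ∧ φ (x (k + 2)) ∉ S)
    (hy : ∀ k, k + 2 ≤ N → ∀ w, H.Adj (y (k + 1)) w → w ∉ S → w = y k ∨ w = y (k + 2))
    (h₀ : φ (x 0) = y 0) (h₁ : φ (x 1) = y 1) : ∀ k ≤ N, φ (x k) = y k := by
  have step : ∀ k, k + 1 ≤ N → φ (x k) = y k ∧ φ (x (k + 1)) = y (k + 1) := by
    intro k
    induction k with
    | zero => exact fun _ => ⟨h₀, h₁⟩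
    | succ k ih =>
      intro hk
      obtain ⟨hk₀, hk₁⟩ := ih (by omega)
      obtain ⟨hadj, hne, hS⟩ := hx k hk
      refine ⟨hk₁, (hy k hk _ (hk₁ ▸ φ.map_adj_iff.2 hadj) hS).resolve_left fun h => ?_⟩
      exact hne (φ.injective (h.trans hk₀.symm))
  rintro (_ | k) hk
  · exact h₀
  · exact (step k hk).2

end SimpleGraph.Iso

namespace Frucht

inductive Vertex (G : Type u) (L : ℕ) : Type u
  | grp (g : G)
  | path (a : G × G) (i : Fin L)
  | leaf (a : G × G)

variable {G : Type u} {L : ℕ}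

instance [Finite G] : Finite (Vertex G L) :=
  Finite.of_surjective
    (Sum.elim Vertex.grp (Sum.elim (fun p : (G × G) × Fin L => .path p.1 p.2) .leaf))
    (by rintro (g | ⟨a, i⟩ | a) <;> simp)

def track (a : G × G) (k : ℕ) : Vertex G L :=
  if h₀ : k = 0 then .grp a.1 else if h : k ≤ L then .path a ⟨k - 1, by omega⟩ else .grp a.2

@[simp] lemma track_zero (a : G × G) : (track a 0 : Vertex G L) = .grp a.1 := rfl

lemma track_of_lt {a : G × G} {k : ℕ} (hk : L < k) : (track a k : Vertex G L) = .grp a.2 := by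
  simp [track, show k ≠ 0 by omega, not_le.2 hk]

lemma path_eq_track (a : G × G) (i : Fin L) : Vertex.path a i = track a (i + 1) := by
  simp [track, Nat.succ_le_of_lt i.isLt]

lemma track_ne_leaf (a b : G × G) (k : ℕ) : (track a k : Vertex G L) ≠ .leaf b := by
  unfold track; split_ifs <;> simp

lemma track_eq_grp_iff {a : G × G} {k : ℕ} {g : G} :
    (track a k : Vertex G L) = .grp g ↔ k = 0 ∧ a.1 = g ∨ L < k ∧ a.2 = g := by
  unfold track; split_ifs <;> simp [*]; omega

lemma track_eq_track_iff {a b : G × G} {j k : ℕ} (hk₀ : 0 < k) (hk : k ≤ L) :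
    (track b j : Vertex G L) = track a k ↔ b = a ∧ j = k := by
  unfold track; split_ifs <;> simp [Fin.ext_iff] <;> omega

lemma track_ne_track_add_two (hL : 2 ≤ L) (a : G × G) {k : ℕ} (hk : k + 1 ≤ L) :
    (track a k : Vertex G L) ≠ track a (k + 2) := fun h => by
  rcases Nat.lt_or_ge (k + 2) (L + 1) with hkL | hkL
  · have := ((track_eq_track_iff (by omega) (by omega)).1 h).2; omega
  · have := ((track_eq_track_iff (by omega) (by omega)).1 h.symm).2; omega

lemma mem_range_grp_or_track_or_leaf (v : Vertex G L) :
    v ∈ Set.range Vertex.grp ∨ (∃ a k, 0 < k ∧ k ≤ L ∧ v = track a k) ∨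
      v ∈ Set.range Vertex.leaf := by
  rcases v with g | ⟨a, i⟩ | a
  · exact .inl ⟨g, rfl⟩
  · exact .inr (.inl ⟨a, i + 1, i.succ_pos, i.isLt, path_eq_track a i⟩)
  · exact .inr (.inr ⟨a, rfl⟩)

variable [Group G]

instance : SMul G (Vertex G L) where
  smul t
    | .grp g => .grp (t * g)
    | .path a i => .path (t • a) i
    | .leaf a => .leaf (t • a)

@[simp] lemma smul_grp (t g : G) : t • (Vertex.grp g : Vertex G L) = .grp (t * g) := rfl
@[simp] lemma smul_path (t : G) (a : G × G) (i : Fin L) :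
    t • Vertex.path a i = .path (t • a) i := rfl
@[simp] lemma smul_leaf (t : G) (a : G × G) :
    t • (Vertex.leaf a : Vertex G L) = .leaf (t • a) := rfl

instance : MulAction G (Vertex G L) where
  one_smul := by rintro (g | ⟨a, i⟩ | a) <;> simp
  mul_smul := by rintro s t (g | ⟨a, i⟩ | a) <;> simp [mul_smul, mul_assoc]

@[simp] lemma smul_track (t : G) (a : G × G) (k : ℕ) :
    t • (track a k : Vertex G L) = track (t • a) k := by
  unfold track; split_ifs <;> simp

def label (a : G × G) : G := a.1⁻¹ * a.2

@[simp] lemma label_smul (t : G) (a : G × G) : label (t • a) = label a := by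
  simp [label, mul_assoc]

variable (L) in
def graph (pos : G → ℕ) : SimpleGraph (Vertex G L) :=
  .fromRel fun u v => (∃ a k, k ≤ L ∧ u = track a k ∧ v = track a (k + 1)) ∨
    ∃ a, u = .leaf a ∧ v = track a (pos (label a) + 1)

variable {pos : G → ℕ}

lemma adj_leaf_iff {a : G × G} {v : Vertex G L} :
    (graph L pos).Adj (.leaf a) v ↔ v = track a (pos (label a) + 1) := by
  simp only [graph, SimpleGraph.fromRel_adj]
  constructor
  · rintro ⟨-, (⟨b, k, -, h, -⟩ | ⟨b, ⟨⟩, rfl⟩) | (⟨b, k, -, -, h⟩ | ⟨b, -, h⟩)⟩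
    · exact absurd h.symm (track_ne_leaf _ _ _)
    · rfl
    · exact absurd h.symm (track_ne_leaf _ _ _)
    · exact absurd h.symm (track_ne_leaf _ _ _)
  · rintro rfl
    exact ⟨(track_ne_leaf _ _ _).symm, .inl (.inr ⟨a, rfl, rfl⟩)⟩

lemma adj_track {a : G × G} {k : ℕ} {w : Vertex G L} (hk₀ : 0 < k) (hk : k ≤ L)
    (h : (graph L pos).Adj (track a k) w) :
    w = track a (k - 1) ∨ w = track a (k + 1) ∨ w = .leaf a := by
  simp only [graph, SimpleGraph.fromRel_adj] at h
  obtain ⟨-, (⟨b, j, -, h, rfl⟩ | ⟨b, h, -⟩) | (⟨b, j, -, rfl, h⟩ | ⟨b, rfl, h⟩)⟩ := h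
  · obtain ⟨rfl, rfl⟩ := (track_eq_track_iff hk₀ hk).1 h.symm
    exact .inr (.inl rfl)
  · exact absurd h (track_ne_leaf _ _ _)
  · obtain ⟨rfl, hj⟩ := (track_eq_track_iff hk₀ hk).1 h.symm
    exact .inl (by rw [← hj, Nat.add_sub_cancel])
  · obtain ⟨rfl, -⟩ := (track_eq_track_iff hk₀ hk).1 h.symm
    exact .inr (.inr rfl)

lemma eq_track_of_adj_track {a : G × G} {k : ℕ} {w : Vertex G L} (hk₀ : 0 < k) (hk : k ≤ L)
    (h : (graph L pos).Adj (track a k) w) (hw : w ∉ Set.range Vertex.leaf) :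
    w = track a (k - 1) ∨ w = track a (k + 1) :=
  (adj_track hk₀ hk h).imp_right fun h => h.resolve_right fun hl => hw ⟨a, hl.symm⟩

lemma adj_track_succ (hL : 0 < L) (a : G × G) {k : ℕ} (hk : k ≤ L) :
    (graph L pos).Adj (track a k) (track a (k + 1)) := by
  refine (SimpleGraph.fromRel_adj _ _ _).2 ⟨fun h => ?_, .inl (.inl ⟨a, k, hk, rfl, rfl⟩)⟩
  rcases Nat.lt_or_ge k L with hkL | hkL
  · exact absurd ((track_eq_track_iff k.succ_pos hkL).1 h).2 k.succ_ne_self.symm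
  · exact absurd ((track_eq_track_iff (by omega) hk).1 h.symm).2 k.succ_ne_self

lemma adj_smul (t : G) {u v : Vertex G L} (h : (graph L pos).Adj u v) :
    (graph L pos).Adj (t • u) (t • v) := by
  obtain ⟨hne, h⟩ := (SimpleGraph.fromRel_adj _ _ _).1 h
  refine (SimpleGraph.fromRel_adj _ _ _).2 ⟨(MulAction.injective t).ne hne, ?_⟩
  rcases h with (⟨a, k, hk, rfl, rfl⟩ | ⟨a, rfl, rfl⟩) | (⟨a, k, hk, rfl, rfl⟩ | ⟨a, rfl, rfl⟩)
  · exact .inl (.inl ⟨t • a, k, hk, smul_track .., smul_track ..⟩)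
  · exact .inl (.inr ⟨t • a, rfl, by simp⟩)
  · exact .inr (.inl ⟨t • a, k, hk, smul_track .., smul_track ..⟩)
  · exact .inr (.inr ⟨t • a, rfl, by simp⟩)

variable (L pos) in
def translate : G →* (graph L pos ≃g graph L pos) where
  toFun t :=
    { toEquiv := MulAction.toPerm t
      map_rel_iff' := ⟨fun h => by simpa using adj_smul t⁻¹ h, adj_smul t⟩ }
  map_one' := RelIso.ext (one_smul G)
  map_mul' s t := RelIso.ext (mul_smul s t)

@[simp] lemma translate_apply (t : G) (v : Vertex G L) : translate L pos t v = t • v := rfl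

lemma translate_injective : Function.Injective (translate L pos) := fun s t h => by
  simpa using congr($h (Vertex.grp 1))

lemma encard_neighborSet_leaf (a : G × G) :
    ((graph L pos).neighborSet (.leaf a)).encard = 1 := by
  rw [show (graph L pos).neighborSet (.leaf a) = {track a (pos (label a) + 1)} from
    Set.ext fun _ => adj_leaf_iff, Set.encard_singleton]

lemma encard_neighborSet_track_mem (hL : 2 ≤ L) (a : G × G) {k : ℕ} (hk₀ : 0 < k) (hk : k ≤ L) :
    ((graph L pos).neighborSet (track a k)).encard ∈ Set.Icc 2 3 := by
  have hne : (track a (k - 1) : Vertex G L) ≠ track a (k + 1) := by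
    simpa [show k - 1 + 2 = k + 1 by omega] using
      track_ne_track_add_two hL a (k := k - 1) (by omega)
  constructor
  · rw [← Set.encard_pair hne]
    refine Set.encard_le_encard ?_
    rintro w (rfl | rfl)
    · have := (adj_track_succ (L := L) (pos := pos) (by omega) a (k := k - 1) (by omega)).symm
      rwa [show k - 1 + 1 = k by omega] at this
    · exact adj_track_succ (by omega) a hk
  · classical
    calc _ ≤ ((({track a (k - 1), track a (k + 1), .leaf a} : Finset (Vertex G L)) :
          Set (Vertex G L))).encard :=
          Set.encard_le_encard fun w hw => by simpa using adj_track hk₀ hk hw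
      _ ≤ 3 := by
          rw [Set.encard_coe_eq_coe_finsetCard]
          exact_mod_cast Finset.card_le_three

lemma four_le_encard_neighborSet_grp [Nontrivial G] (hL : 2 ≤ L) (g : G) :
    4 ≤ ((graph L pos).neighborSet (.grp g)).encard := by
  let f : G ⊕ G → Vertex G L := Sum.elim (fun h => track (g, h) 1) (fun h => track (h, g) L)
  have hf : f.Injective := by
    refine Function.Injective.sumElim (fun h h' e => ?_) (fun h h' e => ?_) (fun h h' e => ?_)
    · simpa using ((track_eq_track_iff one_pos (by omega)).1 e).1
    · simpa using ((track_eq_track_iff (by omega) le_rfl).1 e).1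
    · have := ((track_eq_track_iff (by omega) le_rfl).1 e).2; omega
  have hrange : Set.range f ⊆ (graph L pos).neighborSet (.grp g) := by
    rintro _ ⟨h | h, rfl⟩
    · simpa [f] using adj_track_succ (L := L) (pos := pos) (by omega) (g, h) (k := 0) (by omega)
    · have := (adj_track_succ (L := L) (pos := pos) (by omega) (h, g) le_rfl).symm
      rwa [track_of_lt (Nat.lt_succ_self L)] at this
  have h2 : 2 ≤ ENat.card G := Order.add_one_le_of_lt ENat.one_lt_card
  calc (4 : ℕ∞) = 2 + 2 := by norm_num
    _ ≤ ENat.card (G ⊕ G) := by rw [ENat.card_sum]; exact add_le_add h2 h2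
    _ ≤ (Set.range f).encard := hf.encard_range
    _ ≤ _ := Set.encard_le_encard hrange

variable [Nontrivial G]

lemma encard_neighborSet_eq_one_iff (hL : 2 ≤ L) {v : Vertex G L} :
    ((graph L pos).neighborSet v).encard = 1 ↔ v ∈ Set.range Vertex.leaf := by
  refine ⟨fun h => ?_, fun ⟨a, hv⟩ => hv ▸ encard_neighborSet_leaf a⟩
  rcases mem_range_grp_or_track_or_leaf v with ⟨g, rfl⟩ | ⟨a, k, hk₀, hk, rfl⟩ | hv
  · have := four_le_encard_neighborSet_grp (pos := pos) hL g
    simp [h] at this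
  · have := (encard_neighborSet_track_mem (pos := pos) hL a hk₀ hk).1
    simp [h] at this
  · exact hv

lemma four_le_encard_neighborSet_iff (hL : 2 ≤ L) {v : Vertex G L} :
    4 ≤ ((graph L pos).neighborSet v).encard ↔ v ∈ Set.range Vertex.grp := by
  refine ⟨fun h => ?_, fun ⟨g, hv⟩ => hv ▸ four_le_encard_neighborSet_grp hL g⟩
  rcases mem_range_grp_or_track_or_leaf v with hv | ⟨a, k, hk₀, hk, rfl⟩ | ⟨a, rfl⟩
  · exact hv
  · have := h.trans (encard_neighborSet_track_mem (pos := pos) hL a hk₀ hk).2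
    norm_num at this
  · rw [encard_neighborSet_leaf] at h
    norm_num at h

variable (φ : graph L pos ≃g graph L pos)

lemma apply_mem_range_leaf_iff (hL : 2 ≤ L) {v : Vertex G L} :
    φ v ∈ Set.range Vertex.leaf ↔ v ∈ Set.range Vertex.leaf := by
  rw [← encard_neighborSet_eq_one_iff hL, ← encard_neighborSet_eq_one_iff hL,
    φ.encard_neighborSet]

lemma apply_mem_range_grp_iff (hL : 2 ≤ L) {v : Vertex G L} :
    φ v ∈ Set.range Vertex.grp ↔ v ∈ Set.range Vertex.grp := by
  rw [← four_le_encard_neighborSet_iff hL, ← four_le_encard_neighborSet_iff hL,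
    φ.encard_neighborSet]

lemma apply_track_notMem_range_leaf (hL : 2 ≤ L) (a : G × G) (k : ℕ) :
    φ (track a k) ∉ Set.range Vertex.leaf :=
  (apply_mem_range_leaf_iff φ hL).not.2 fun ⟨_, hb⟩ => track_ne_leaf _ _ _ hb.symm

lemma exists_apply_track_eq_track (hL : 2 ≤ L) (a : G × G) {k : ℕ} (hk₀ : 0 < k) (hk : k ≤ L) :
    ∃ b j, 0 < j ∧ j ≤ L ∧ φ (track a k) = track b j := by
  rcases mem_range_grp_or_track_or_leaf (φ (track a k)) with hg | h | hl
  · obtain ⟨g, hg⟩ := (apply_mem_range_grp_iff φ hL).1 hg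
    rcases track_eq_grp_iff.1 hg.symm with ⟨h, -⟩ | ⟨h, -⟩ <;> omega
  · exact h
  · exact absurd hl (apply_track_notMem_range_leaf φ hL a k)

lemma exists_apply_track_eq_or_rev (hL : 2 ≤ L) (a : G × G) :
    ∃ b, (∀ k ≤ L + 1, φ (track a k) = track b k) ∨
      ∀ k ≤ L + 1, φ (track a k) = track b (L + 1 - k) := by
  obtain ⟨y, hy⟩ := (apply_mem_range_grp_iff φ hL).2 ⟨a.1, rfl⟩
  obtain ⟨b, j, hj₀, hj, hb⟩ := exists_apply_track_eq_track φ hL a one_pos (by omega)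
  have hadj : (graph L pos).Adj (track b j) (.grp y) := by
    rw [hy, ← hb]
    exact (φ.map_adj_iff.2 (adj_track_succ (by omega) a (k := 0) (by omega))).symm
  have hx : ∀ k, k + 2 ≤ L + 1 → (graph L pos).Adj (track a (k + 1)) (track a (k + 2)) ∧
      (track a (k + 2) : Vertex G L) ≠ track a k ∧ φ (track a (k + 2)) ∉ Set.range Vertex.leaf :=
    fun k hk => ⟨adj_track_succ (by omega) a (by omega),
      (track_ne_track_add_two hL a (by omega)).symm, apply_track_notMem_range_leaf φ hL a _⟩
  refine ⟨b, ?_⟩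
  -- `grp y` comes before or after `track b j` on the path of `b`: this fixes the orientation.
  rcases adj_track hj₀ hj hadj with h | h | h
  · obtain ⟨hj₁, rfl⟩ : j - 1 = 0 ∧ b.1 = y := by
      simpa [show ¬ L < j - 1 by omega] using track_eq_grp_iff.1 h.symm
    refine .inl (φ.apply_path_eq hx (fun k hk w hw hS => ?_) hy.symm ?_)
    · simpa using eq_track_of_adj_track (k := k + 1) (by omega) (by omega) hw hS
    · rw [hb, show j = 1 by omega]
  · obtain ⟨hj₁, rfl⟩ : L < j + 1 ∧ b.2 = y := by
      simpa [show j + 1 ≠ 0 by omega] using track_eq_grp_iff.1 h.symm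
    refine .inr (φ.apply_path_eq hx (fun k hk w hw hS => ?_) ?_ ?_)
    · rw [show L + 1 - (k + 1) = L - k by omega] at hw
      rw [show L + 1 - k = L - k + 1 by omega, show L + 1 - (k + 2) = L - k - 1 by omega]
      exact (eq_track_of_adj_track (by omega) (by omega) hw hS).symm
    · rw [Nat.sub_zero, track_of_lt (Nat.lt_succ_self L), track_zero, hy]
    · rw [hb, show j = L by omega, Nat.add_sub_cancel]
  · exact absurd h.symm (by simp)

lemma apply_leaf_of_apply_track (hL : 2 ≤ L) {a b : G × G} {j : ℕ} (hj₀ : 0 < j) (hj : j ≤ L)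
    (h : φ (track a (pos (label a) + 1)) = track b j) :
    φ (.leaf a) = .leaf b ∧ j = pos (label b) + 1 := by
  obtain ⟨c, hc⟩ := (apply_mem_range_leaf_iff φ hL).2 ⟨a, rfl⟩
  have hadj : (graph L pos).Adj (.leaf c) (track b j) := by
    rw [hc, ← h]
    exact φ.map_adj_iff.2 (adj_leaf_iff.2 rfl)
  obtain ⟨rfl, hj'⟩ := (track_eq_track_iff hj₀ hj).1 (adj_leaf_iff.1 hadj).symm
  exact ⟨hc.symm, hj'.symm⟩

theorem exists_apply_track_eq (hpos : ∀ s t, pos s + pos t + 1 < L)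
    (hinj : Function.Injective pos) (a : G × G) :
    ∃ b, label b = label a ∧ (∀ k ≤ L + 1, φ (track a k) = track b k) ∧
      φ (.leaf a) = .leaf b := by
  have hL : 2 ≤ L := by have := hpos 1 1; omega
  have hpa := hpos (label a) (label a)
  obtain ⟨b, hfwd | hrev⟩ := exists_apply_track_eq_or_rev φ hL a
  · obtain ⟨hleaf, hj⟩ := apply_leaf_of_apply_track φ hL (by omega) (by omega) (hfwd _ (by omega))
    exact ⟨b, hinj (by omega), hfwd, hleaf⟩
  · obtain ⟨-, hj⟩ := apply_leaf_of_apply_track φ hL (by omega) (by omega) (hrev _ (by omega))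
    have := hpos (label a) (label b)
    omega

lemma apply_grp_eq_mul (hpos : ∀ s t, pos s + pos t + 1 < L) (hinj : Function.Injective pos)
    {t : G} (ht : φ (.grp 1) = .grp t) (g : G) : φ (.grp g) = .grp (t * g) := by
  obtain ⟨b, hb, htrack, -⟩ := exists_apply_track_eq φ hpos hinj (1, g)
  have hb₁ : t = b.1 := by simpa [ht] using htrack 0 (Nat.zero_le _)
  have hb₂ : b.2 = b.1 * g := inv_mul_eq_iff_eq_mul.1 (by simpa [label] using hb)
  have h := htrack (L + 1) le_rfl
  rwa [track_of_lt (Nat.lt_succ_self L), track_of_lt (Nat.lt_succ_self L), hb₂, ← hb₁] at h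

lemma apply_track_eq_smul (hpos : ∀ s t, pos s + pos t + 1 < L) (hinj : Function.Injective pos)
    {t : G} (h : ∀ g, φ (.grp g) = .grp (t * g)) (a : G × G) :
    (∀ k ≤ L + 1, φ (track a k) = track (t • a) k) ∧ φ (.leaf a) = .leaf (t • a) := by
  obtain ⟨b, -, htrack, hleaf⟩ := exists_apply_track_eq φ hpos hinj a
  have h₁ := (htrack 0 (Nat.zero_le _)).symm.trans (h a.1)
  have h₂ := htrack (L + 1) le_rfl
  rw [track_of_lt (Nat.lt_succ_self L), track_of_lt (Nat.lt_succ_self L), h] at h₂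
  obtain rfl : b = t • a := Prod.ext (by simpa using h₁) (by simpa using h₂.symm)
  exact ⟨htrack, hleaf⟩

lemma eq_translate (hpos : ∀ s t, pos s + pos t + 1 < L) (hinj : Function.Injective pos) {t : G}
    (h : ∀ g, φ (.grp g) = .grp (t * g)) : φ = translate L pos t := by
  refine RelIso.ext ?_
  rintro (g | ⟨a, i⟩ | a)
  · exact h g
  · rw [path_eq_track, (apply_track_eq_smul φ hpos hinj h a).1 _ (by omega)]
    simp
  · rw [(apply_track_eq_smul φ hpos hinj h a).2]
    simp

theorem translate_bijective (hpos : ∀ s t, pos s + pos t + 1 < L)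
    (hinj : Function.Injective pos) : Function.Bijective (translate L pos) := by
  refine ⟨translate_injective, fun φ => ?_⟩
  have hL : 2 ≤ L := by have := hpos 1 1; omega
  obtain ⟨t, ht⟩ := (apply_mem_range_grp_iff φ hL).2 ⟨1, rfl⟩
  exact ⟨t, (eq_translate φ hpos hinj (apply_grp_eq_mul φ hpos hinj ht.symm)).symm⟩

end Frucht

/-- **Frucht's theorem.** For every finite group `G`, there exists a finite graph
`(V; E)` (a nonempty finite vertex set with a simple graph structure) such that `G`
is isomorphic to the automorphism group of the graph. -/
theorem finite_group_is_finite_graph_automorphism_group (G : Type u) [Group G] [Finite G] :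
    ∃ (V : Type u) (_ : Nonempty V) (_ : Finite V) (Γ : SimpleGraph V),
      Nonempty (G ≃* (Γ ≃g Γ)) := by
  rcases subsingleton_or_nontrivial G with hG | hG
  · have : Subsingleton ((⊥ : SimpleGraph G) ≃g ⊥) :=
      ⟨fun _ _ => RelIso.ext fun _ => Subsingleton.elim (α := G) _ _⟩
    exact ⟨G, ⟨1⟩, inferInstance, ⊥, ⟨MulEquiv.ofBijective (1 : G →* _)
      ⟨fun _ _ _ => Subsingleton.elim _ _, fun _ => ⟨1, Subsingleton.elim _ _⟩⟩⟩⟩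
  · obtain ⟨n, ⟨e⟩⟩ := Finite.exists_equiv_fin G
    have hpos : ∀ s t, (e s : ℕ) + e t + 1 < 2 * n := fun s t => by
      have := (e s).isLt; have := (e t).isLt; omega
    exact ⟨Frucht.Vertex G (2 * n), ⟨.grp 1⟩, inferInstance, Frucht.graph (2 * n) (e · : G → ℕ),
      ⟨MulEquiv.ofBijective _
        (Frucht.translate_bijective hpos (Fin.val_injective.comp e.injective))⟩⟩
end

section
/- Assume the insertion setup, assume K is a simple lattice, assume (L, ≤; γ; H, ν) is a quasi-colored lattice (L carrying the order induced from M), and assume that for every x ∈ L with x < a one has cg_L(x,a) = ∇_L and for every y ∈ L with b < y one has cg_L(b,y) = ∇_L. Define γ' : Pairs(M) → H by: γ'(x,y) = γ(x,y) if x, y ∈ L; γ'(x,x) = γ(a,a) if x ∈ K \ L; γ'(x,y) = γ(a,b) if x, y ∈ K, x ≠ y, and not both x, y ∈ L; γ'(x,y) = γ(a,y) if x ∈ K \ L and y ∈ L \ K; and γ'(x,y) = γ(x,b) if x ∈ L \ K and y ∈ K \ L. Then (M, ≤; γ'; H, ν) is a quasi-colored lattice. -/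
/-!
Every pair of `M` generates the same principal congruence of `M` as a pair of `L` of the same
`γ'`-color: a pair inside `K` behaves like `(a, a)` or, by simplicity of `K`, like `(a, b)`, and the
mixed pairs `(k, y)`, `(x, k)` behave like `(a, y)`, `(x, b)`. It remains to see that principal
congruences of `L` are the same whether computed in `L` or in `M`, i.e. that every congruence `θ`
of `L` extends to `M`. If `θ` collapses `a` and `b`, pull it back along the map `M → L` sending
`K \ L` to `b`, a join-homomorphism (left adjoint of the inclusion) that is `θ`-equivalent to the
meet-homomorphism sending `K \ L` to `a`. Otherwise extend `θ` by equality on `K \ L`: since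
`cg(b, y) = ∇` for `b < y` and `cg(x, a) = ∇` for `x < a`, a `θ`-class cannot meet both `↓a` and
its complement (nor `↑b` and its complement), so joins and meets with `K \ L` respect `θ`.
-/

/-- A congruence of a lattice: an equivalence relation compatible with `⊔` and `⊓`. -/
structure LatCon (L : Type*) [Lattice L] where
  rel : L → L → Prop
  refl : ∀ x, rel x x
  symm : ∀ {x y}, rel x y → rel y x
  trans : ∀ {x y z}, rel x y → rel y z → rel x z
  sup : ∀ {x₁ y₁ x₂ y₂}, rel x₁ y₁ → rel x₂ y₂ → rel (x₁ ⊔ x₂) (y₁ ⊔ y₂)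
  inf : ∀ {x₁ y₁ x₂ y₂}, rel x₁ y₁ → rel x₂ y₂ → rel (x₁ ⊓ x₂) (y₁ ⊓ y₂)

/-- The principal congruence `cg(a,b)`: the smallest congruence collapsing `a` and `b`. -/
def latCg {L : Type*} [Lattice L] (a b : L) : L → L → Prop :=
  fun x y => ∀ θ : LatCon L, θ.rel a b → θ.rel x y

/-- A lattice is simple if it has at least two elements and its only congruences
are the equality congruence `Δ` and the full congruence `∇`. -/
def IsSimpleLat (L : Type*) [Lattice L] : Prop :=
  Nontrivial L ∧ ∀ θ : LatCon L, (∀ x y, θ.rel x y ↔ x = y) ∨ (∀ x y, θ.rel x y)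

/-- `γ` is a quasi-coloring of the lattice `L` with colors in the quasiordered set
`(H, ν)`: it is surjective onto `H` and satisfies (C1) and (C2). -/
def IsQuasiColoring {L : Type*} [Lattice L] {H : Type*} (ν : H → H → Prop)
    (γ : {p : L × L // p.1 ≤ p.2} → H) : Prop :=
  Function.Surjective γ ∧
  ∀ p q : {p : L × L // p.1 ≤ p.2},
    (ν (γ p) (γ q) → latCg p.1.1 p.1.2 ≤ latCg q.1.1 q.1.2) ∧
    (latCg p.1.1 p.1.2 ≤ latCg q.1.1 q.1.2 → ν (γ p) (γ q))

namespace LatCon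

variable {α β : Type*} [Lattice α] [Lattice β]

def comap (f : LatticeHom β α) (Θ : LatCon α) : LatCon β where
  rel x y := Θ.rel (f x) (f y)
  refl _ := Θ.refl _
  symm h := Θ.symm h
  trans h₁ h₂ := Θ.trans h₁ h₂
  sup h₁ h₂ := by simpa only [map_sup] using Θ.sup h₁ h₂
  inf h₁ h₂ := by simpa only [map_inf] using Θ.inf h₁ h₂

def comapSupInf (θ : LatCon β) (f : SupHom α β) (g : InfHom α β)
    (hfg : ∀ x, θ.rel (f x) (g x)) : LatCon α where
  rel x y := θ.rel (f x) (f y)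
  refl _ := θ.refl _
  symm h := θ.symm h
  trans h₁ h₂ := θ.trans h₁ h₂
  sup h₁ h₂ := by simpa only [map_sup] using θ.sup h₁ h₂
  inf {x₁ y₁ x₂ y₂} h₁ h₂ := by
    have hg : ∀ {x y}, θ.rel (f x) (f y) → θ.rel (g x) (g y) := fun h =>
      θ.trans (θ.symm (hfg _)) (θ.trans h (hfg _))
    have := θ.inf (hg h₁) (hg h₂)
    rw [← map_inf, ← map_inf] at this
    exact θ.trans (hfg _) (θ.trans this (θ.symm (hfg _)))

theorem rel_of_mem_Icc (Θ : LatCon α) {a b u v : α} (h : Θ.rel a b)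
    (hu : u ∈ Set.Icc a b) (hv : v ∈ Set.Icc a b) : Θ.rel u v := by
  have hub : ∀ {w}, w ∈ Set.Icc a b → Θ.rel w b := fun {w} hw => by
    simpa only [sup_eq_left.2 hw.1, sup_eq_right.2 hw.2] using Θ.sup (Θ.refl w) h
  exact Θ.trans (hub hu) (Θ.symm (hub hv))

theorem rel_iff_of_isSimpleLat (Θ : LatCon α) {a b u v : α} (hK : IsSimpleLat (Set.Icc a b))
    (hu : u ∈ Set.Icc a b) (hv : v ∈ Set.Icc a b) (huv : u ≠ v) : Θ.rel u v ↔ Θ.rel a b := by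
  refine ⟨fun h => ?_, fun h => Θ.rel_of_mem_Icc h hu hv⟩
  let incl : LatticeHom (Set.Icc a b) α := ⟨⟨Subtype.val, fun _ _ => rfl⟩, fun _ _ => rfl⟩
  have hab : a ≤ b := hu.1.trans hu.2
  rcases hK.2 (Θ.comap incl) with hΔ | hfull
  · exact absurd (congrArg Subtype.val ((hΔ ⟨u, hu⟩ ⟨v, hv⟩).1 h)) huv
  · exact hfull ⟨a, le_rfl, hab⟩ ⟨b, hab, le_rfl⟩

theorem rel_iff_of_mem_Ico_of_le {a b x y : α} (hK : IsSimpleLat (Set.Icc a b))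
    (hx : x ∈ Set.Ico a b) (hby : b ≤ y) (Θ : LatCon α) : Θ.rel x y ↔ Θ.rel a y := by
  obtain ⟨hax, hxb⟩ := hx
  constructor
  · intro h
    have hxb' : Θ.rel x b := by
      simpa only [inf_eq_left.2 hxb.le, inf_eq_right.2 hby] using Θ.inf h (Θ.refl b)
    have hab := (Θ.rel_iff_of_isSimpleLat hK ⟨hax, hxb.le⟩ ⟨hax.trans hxb.le, le_rfl⟩ hxb.ne).1 hxb'
    have hby' : Θ.rel b y := by
      simpa only [sup_eq_right.2 hxb.le, sup_eq_left.2 hby] using Θ.sup h (Θ.refl b)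
    exact Θ.trans hab hby'
  · intro h
    simpa only [sup_eq_right.2 hax, sup_eq_left.2 (hxb.le.trans hby)] using Θ.sup h (Θ.refl x)

theorem rel_iff_of_le_of_mem_Ioc {a b x y : α} (hK : IsSimpleLat (Set.Icc a b))
    (hxa : x ≤ a) (hy : y ∈ Set.Ioc a b) (Θ : LatCon α) : Θ.rel x y ↔ Θ.rel x b := by
  obtain ⟨hay, hyb⟩ := hy
  constructor
  · intro h
    have hay' : Θ.rel a y := by
      simpa only [sup_eq_right.2 hxa, sup_eq_left.2 hay.le] using Θ.sup h (Θ.refl a)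
    have hab := (Θ.rel_iff_of_isSimpleLat hK ⟨le_rfl, hay.le.trans hyb⟩ ⟨hay.le, hyb⟩ hay.ne).1 hay'
    have hxa' : Θ.rel x a := by
      simpa only [inf_eq_left.2 hxa, inf_eq_right.2 hay.le] using Θ.inf h (Θ.refl a)
    exact Θ.trans hxa' hab
  · intro h
    simpa only [inf_eq_left.2 (hxa.trans hay.le), inf_eq_right.2 hyb]
      using Θ.inf h (Θ.refl y)

theorem rel_of_rel_of_le_of_not_le {a b x y : α} (hab : a ⋖ b)
    (hcg : ∀ z, b < z → ∀ u v, latCg b z u v) (θ : LatCon α) (h : θ.rel x y)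
    (hx : x ≤ a) (hy : ¬y ≤ a) : θ.rel a b := by
  have hb : θ.rel b (y ⊔ b) := by
    simpa only [sup_eq_right.2 (hx.trans hab.le)] using θ.sup h (θ.refl b)
  rcases (le_sup_right : b ≤ y ⊔ b).lt_or_eq with hlt | heq
  · exact hcg _ hlt a b θ hb
  · have ha : θ.rel a (y ⊔ a) := by simpa only [sup_eq_right.2 hx] using θ.sup h (θ.refl a)
    have hyab : y ⊔ a = b := ((hab.eq_or_eq le_sup_right
      (sup_le (heq ▸ le_sup_left) hab.le)).resolve_left (right_lt_sup.2 hy).ne')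
    rwa [hyab] at ha

theorem rel_of_rel_of_ge_of_not_ge {a b x y : α} (hab : a ⋖ b)
    (hcg : ∀ z, z < a → ∀ u v, latCg z a u v) (θ : LatCon α) (h : θ.rel x y)
    (hx : b ≤ x) (hy : ¬b ≤ y) : θ.rel a b := by
  have ha : θ.rel (y ⊓ a) a := by
    simpa only [inf_eq_right.2 (hab.le.trans hx)] using θ.symm (θ.inf h (θ.refl a))
  rcases (inf_le_right : y ⊓ a ≤ a).lt_or_eq with hlt | heq
  · exact hcg _ hlt a b θ ha
  · have hb : θ.rel (y ⊓ b) b := by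
      simpa only [inf_eq_right.2 hx] using θ.symm (θ.inf h (θ.refl b))
    have hyab : y ⊓ b = a := ((hab.eq_or_eq (le_inf (heq ▸ inf_le_left) hab.le)
      inf_le_right).resolve_right (inf_lt_right.2 hy).ne)
    rwa [hyab] at hb

section Sublattice

variable {L : Sublattice α}

def extendRel (θ : LatCon L) (x y : α) : Prop :=
  x = y ∨ ∃ (hx : x ∈ L) (hy : y ∈ L), θ.rel ⟨x, hx⟩ ⟨y, hy⟩

theorem extendRel_coe_iff (θ : LatCon L) (u v : L) : θ.extendRel u v ↔ θ.rel u v :=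
  ⟨by rintro (huv | ⟨_, _, h⟩); exacts [Subtype.ext huv ▸ θ.refl u, h],
    fun h => Or.inr ⟨u.2, v.2, h⟩⟩

def extend (θ : LatCon L)
    (hsup : ∀ x y : L, θ.rel x y → ∀ k ∉ L, θ.extendRel (x ⊔ k) (y ⊔ k))
    (hinf : ∀ x y : L, θ.rel x y → ∀ k ∉ L, θ.extendRel (x ⊓ k) (y ⊓ k)) : LatCon α where
  rel := θ.extendRel
  refl _ := Or.inl rfl
  symm := by
    rintro x y (rfl | ⟨hx, hy, h⟩)
    exacts [Or.inl rfl, Or.inr ⟨hy, hx, θ.symm h⟩]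
  trans := by
    rintro x y z (rfl | ⟨hx, hy, h₁⟩) (rfl | ⟨_, hz, h₂⟩)
    exacts [Or.inl rfl, Or.inr ⟨_, hz, h₂⟩, Or.inr ⟨hx, hy, h₁⟩, Or.inr ⟨hx, hz, θ.trans h₁ h₂⟩]
  sup := by
    rintro x₁ y₁ x₂ y₂ (rfl | ⟨hx₁, hy₁, h₁⟩) (rfl | ⟨hx₂, hy₂, h₂⟩)
    · exact Or.inl rfl
    · by_cases hx₁ : x₁ ∈ L
      · exact Or.inr ⟨L.supClosed hx₁ hx₂, L.supClosed hx₁ hy₂, θ.sup (θ.refl ⟨x₁, hx₁⟩) h₂⟩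
      · simpa only [sup_comm x₁] using hsup ⟨x₂, hx₂⟩ ⟨y₂, hy₂⟩ h₂ x₁ hx₁
    · by_cases hx₂ : x₂ ∈ L
      · exact Or.inr ⟨L.supClosed hx₁ hx₂, L.supClosed hy₁ hx₂, θ.sup h₁ (θ.refl ⟨x₂, hx₂⟩)⟩
      · exact hsup ⟨x₁, hx₁⟩ ⟨y₁, hy₁⟩ h₁ x₂ hx₂
    · exact Or.inr ⟨L.supClosed hx₁ hx₂, L.supClosed hy₁ hy₂, θ.sup h₁ h₂⟩
  inf := by
    rintro x₁ y₁ x₂ y₂ (rfl | ⟨hx₁, hy₁, h₁⟩) (rfl | ⟨hx₂, hy₂, h₂⟩)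
    · exact Or.inl rfl
    · by_cases hx₁ : x₁ ∈ L
      · exact Or.inr ⟨L.infClosed hx₁ hx₂, L.infClosed hx₁ hy₂, θ.inf (θ.refl ⟨x₁, hx₁⟩) h₂⟩
      · simpa only [inf_comm x₁] using hinf ⟨x₂, hx₂⟩ ⟨y₂, hy₂⟩ h₂ x₁ hx₁
    · by_cases hx₂ : x₂ ∈ L
      · exact Or.inr ⟨L.infClosed hx₁ hx₂, L.infClosed hy₁ hx₂, θ.inf h₁ (θ.refl ⟨x₂, hx₂⟩)⟩
      · exact hinf ⟨x₁, hx₁⟩ ⟨y₁, hy₁⟩ h₁ x₂ hx₂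
    · exact Or.inr ⟨L.infClosed hx₁ hx₂, L.infClosed hy₁ hy₂, θ.inf h₁ h₂⟩

end Sublattice

end LatCon

section latCg

variable {α : Type*} [Lattice α]

theorem latCg_le_iff {u₁ v₁ u₂ v₂ : α} : latCg u₁ v₁ ≤ latCg u₂ v₂ ↔ latCg u₂ v₂ u₁ v₁ :=
  ⟨fun h => h u₁ v₁ fun _ hθ => hθ, fun h _ _ hxy θ hθ => hxy θ (h θ hθ)⟩

theorem latCg_congr {u v x y : α} (h : ∀ Θ : LatCon α, Θ.rel u v ↔ Θ.rel x y) :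
    latCg u v = latCg x y := by
  ext s t
  exact forall_congr' fun Θ => imp_congr_left (h Θ)

end latCg

theorem IsQuasiColoring.of_sublattice {M : Type*} [Lattice M] {L : Sublattice M} {H : Type*}
    {ν : H → H → Prop} {γ : {p : L × L // p.1 ≤ p.2} → H} (hγ : IsQuasiColoring ν γ)
    {γ' : {p : M × M // p.1 ≤ p.2} → H}
    (hcg : ∀ u v x y : L, latCg (u : M) v x y ↔ latCg u v x y)
    (hext : ∀ p : {p : L × L // p.1 ≤ p.2}, γ' ⟨(p.1.1, p.1.2), p.2⟩ = γ p)
    (hrep : ∀ p : {p : M × M // p.1 ≤ p.2}, ∃ q : {q : L × L // q.1 ≤ q.2},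
      γ' p = γ q ∧ latCg p.1.1 p.1.2 = latCg (q.1.1 : M) q.1.2) :
    IsQuasiColoring ν γ' := by
  refine ⟨fun c => ?_, fun p p' => ?_⟩
  · obtain ⟨q, rfl⟩ := hγ.1 c
    exact ⟨_, hext q⟩
  · obtain ⟨q, hγq, hq⟩ := hrep p
    obtain ⟨q', hγq', hq'⟩ := hrep p'
    rw [hγq, hγq', hq, hq', latCg_le_iff, hcg, ← latCg_le_iff]
    exact hγ.2 q q'

structure IsInsertion {M : Type*} [Lattice M] (L : Sublattice M) (a b : M) : Prop where
  lt : a < b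
  left_mem : a ∈ L
  right_mem : b ∈ L
  mem_or_mem_Icc : ∀ x, x ∈ L ∨ x ∈ Set.Icc a b
  not_lt_lt : ∀ l ∈ L, ¬(a < l ∧ l < b)
  order : ∀ k ∈ Set.Icc a b, ∀ l ∈ (L : Set M) \ Set.Icc a b,
    (k ≤ l ↔ b ≤ l ∨ (k = a ∧ a ≤ l)) ∧ (l ≤ k ↔ l ≤ a ∨ (k = b ∧ l ≤ b))

namespace IsInsertion

variable {M : Type*} [Lattice M] {L : Sublattice M} {a b : M}

theorem mem_Ioo_of_not_mem (hI : IsInsertion L a b) {k : M} (hk : k ∉ L) : k ∈ Set.Ioo a b :=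
  have hkK := (hI.mem_or_mem_Icc k).resolve_left hk
  ⟨hkK.1.lt_of_ne fun h => hk (h ▸ hI.left_mem), hkK.2.lt_of_ne fun h => hk (h ▸ hI.right_mem)⟩

theorem right_le_of_le (hI : IsInsertion L a b) {k l : M} (hk : k ∉ L) (hl : l ∈ L)
    (hkl : k ≤ l) : b ≤ l := by
  by_cases hlK : l ∈ Set.Icc a b
  · refine (hlK.2.lt_or_eq.resolve_left fun hlb => ?_).ge
    exact hI.not_lt_lt l hl ⟨(hI.mem_Ioo_of_not_mem hk).1.trans_le hkl, hlb⟩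
  · exact ((hI.order k (Set.Ioo_subset_Icc_self (hI.mem_Ioo_of_not_mem hk)) l
      ⟨hl, hlK⟩).1.1 hkl).resolve_right fun h => hk (h.1 ▸ hI.left_mem)

theorem le_left_of_le (hI : IsInsertion L a b) {k l : M} (hk : k ∉ L) (hl : l ∈ L)
    (hlk : l ≤ k) : l ≤ a := by
  by_cases hlK : l ∈ Set.Icc a b
  · refine (hlK.1.lt_or_eq.resolve_left fun hal => ?_).ge
    exact hI.not_lt_lt l hl ⟨hal, hlk.trans_lt (hI.mem_Ioo_of_not_mem hk).2⟩
  · exact ((hI.order k (Set.Ioo_subset_Icc_self (hI.mem_Ioo_of_not_mem hk)) l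
      ⟨hl, hlK⟩).2.1 hlk).resolve_right fun h => hk (h.1 ▸ hI.right_mem)

theorem sup_eq_sup_right (hI : IsInsertion L a b) {x k : M} (hx : x ∈ L) (hxa : ¬x ≤ a)
    (hk : k ∉ L) : x ⊔ k = x ⊔ b := by
  refine le_antisymm (sup_le_sup_left (hI.mem_Ioo_of_not_mem hk).2.le x)
    (sup_le le_sup_left ?_)
  by_cases hxk : x ⊔ k ∈ L
  · exact hI.right_le_of_le hk hxk le_sup_right
  · exact absurd (hI.le_left_of_le hxk hx le_sup_left) hxa

theorem inf_eq_inf_left (hI : IsInsertion L a b) {x k : M} (hx : x ∈ L) (hbx : ¬b ≤ x)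
    (hk : k ∉ L) : x ⊓ k = x ⊓ a := by
  refine le_antisymm (le_inf inf_le_left ?_)
    (inf_le_inf_left x (hI.mem_Ioo_of_not_mem hk).1.le)
  by_cases hxk : x ⊓ k ∈ L
  · exact hI.le_left_of_le hk hxk inf_le_right
  · exact absurd (hI.right_le_of_le hxk hx inf_le_left) hbx

theorem covBy (hI : IsInsertion L a b) : (⟨a, hI.left_mem⟩ : L) ⋖ ⟨b, hI.right_mem⟩ :=
  ⟨hI.lt, fun l hal hlb => hI.not_lt_lt l l.2 ⟨hal, hlb⟩⟩

open Classical in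
noncomputable def ceil (hI : IsInsertion L a b) (x : M) : L :=
  if hx : x ∈ L then ⟨x, hx⟩ else ⟨b, hI.right_mem⟩

open Classical in
noncomputable def floor (hI : IsInsertion L a b) (x : M) : L :=
  if hx : x ∈ L then ⟨x, hx⟩ else ⟨a, hI.left_mem⟩

theorem ceil_coe (hI : IsInsertion L a b) (u : L) : hI.ceil u = u := dif_pos u.2

theorem gc_ceil (hI : IsInsertion L a b) : GaloisConnection hI.ceil (↑) := by
  intro x l
  by_cases hx : x ∈ L
  · simp only [ceil, dif_pos hx]
    exact Subtype.mk_le_mk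
  · simp only [ceil, dif_neg hx]
    exact ⟨(hI.mem_Ioo_of_not_mem hx).2.le.trans, hI.right_le_of_le hx l.2⟩

theorem gc_floor (hI : IsInsertion L a b) : GaloisConnection (↑) hI.floor := by
  intro l x
  by_cases hx : x ∈ L
  · simp only [floor, dif_pos hx]
    exact Subtype.mk_le_mk.symm
  · simp only [floor, dif_neg hx]
    exact ⟨hI.le_left_of_le hx l.2,
      fun h => (Subtype.coe_le_coe.2 h).trans (hI.mem_Ioo_of_not_mem hx).1.le⟩

theorem rel_ceil_floor (hI : IsInsertion L a b) {θ : LatCon L}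
    (hθ : θ.rel ⟨a, hI.left_mem⟩ ⟨b, hI.right_mem⟩) (x : M) :
    θ.rel (hI.ceil x) (hI.floor x) := by
  by_cases hx : x ∈ L
  · simpa only [ceil, floor, dif_pos hx] using θ.refl _
  · simpa only [ceil, floor, dif_neg hx] using θ.symm hθ

theorem extendRel_sup (hI : IsInsertion L a b)
    (hcgb : ∀ y : L, (⟨b, hI.right_mem⟩ : L) < y → ∀ u v : L, latCg ⟨b, hI.right_mem⟩ y u v)
    {θ : LatCon L} (hθ : ¬θ.rel ⟨a, hI.left_mem⟩ ⟨b, hI.right_mem⟩) (x y : L)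
    (h : θ.rel x y) {k : M} (hk : k ∉ L) : θ.extendRel (x ⊔ k) (y ⊔ k) := by
  have hle : ∀ {x y : L}, θ.rel x y → (x : M) ≤ a → (y : M) ≤ a := fun h hx => by
    by_contra hy
    exact hθ (LatCon.rel_of_rel_of_le_of_not_le hI.covBy hcgb θ h hx hy)
  by_cases hxa : (x : M) ≤ a
  · have hka := (hI.mem_Ioo_of_not_mem hk).1.le
    left
    rw [sup_eq_right.2 (hxa.trans hka), sup_eq_right.2 ((hle h hxa).trans hka)]
  · have hya : ¬(y : M) ≤ a := fun hya => hxa (hle (θ.symm h) hya)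
    right
    rw [hI.sup_eq_sup_right x.2 hxa hk, hI.sup_eq_sup_right y.2 hya hk]
    exact ⟨L.supClosed x.2 hI.right_mem, L.supClosed y.2 hI.right_mem,
      θ.sup h (θ.refl ⟨b, hI.right_mem⟩)⟩

theorem extendRel_inf (hI : IsInsertion L a b)
    (hcga : ∀ x : L, x < ⟨a, hI.left_mem⟩ → ∀ u v : L, latCg x ⟨a, hI.left_mem⟩ u v)
    {θ : LatCon L} (hθ : ¬θ.rel ⟨a, hI.left_mem⟩ ⟨b, hI.right_mem⟩) (x y : L)
    (h : θ.rel x y) {k : M} (hk : k ∉ L) : θ.extendRel (x ⊓ k) (y ⊓ k) := by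
  have hle : ∀ {x y : L}, θ.rel x y → b ≤ (x : M) → b ≤ (y : M) := fun h hx => by
    by_contra hy
    exact hθ (LatCon.rel_of_rel_of_ge_of_not_ge hI.covBy hcga θ h hx hy)
  by_cases hbx : b ≤ (x : M)
  · have hkb := (hI.mem_Ioo_of_not_mem hk).2.le
    left
    rw [inf_eq_right.2 (hkb.trans hbx), inf_eq_right.2 (hkb.trans (hle h hbx))]
  · have hby : ¬b ≤ (y : M) := fun hby => hbx (hle (θ.symm h) hby)
    right
    rw [hI.inf_eq_inf_left x.2 hbx hk, hI.inf_eq_inf_left y.2 hby hk]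
    exact ⟨L.infClosed x.2 hI.left_mem, L.infClosed y.2 hI.left_mem,
      θ.inf h (θ.refl ⟨a, hI.left_mem⟩)⟩

theorem exists_extension (hI : IsInsertion L a b)
    (hcga : ∀ x : L, x < ⟨a, hI.left_mem⟩ → ∀ u v : L, latCg x ⟨a, hI.left_mem⟩ u v)
    (hcgb : ∀ y : L, (⟨b, hI.right_mem⟩ : L) < y → ∀ u v : L, latCg ⟨b, hI.right_mem⟩ y u v)
    (θ : LatCon L) : ∃ Θ : LatCon M, ∀ u v : L, Θ.rel u v ↔ θ.rel u v := by
  by_cases hθ : θ.rel ⟨a, hI.left_mem⟩ ⟨b, hI.right_mem⟩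
  · refine ⟨θ.comapSupInf ⟨hI.ceil, fun _ _ => hI.gc_ceil.l_sup⟩
      ⟨hI.floor, fun _ _ => hI.gc_floor.u_inf⟩ (hI.rel_ceil_floor hθ), fun u v => ?_⟩
    change θ.rel (hI.ceil u) (hI.ceil v) ↔ _
    rw [hI.ceil_coe, hI.ceil_coe]
  · exact ⟨θ.extend (hI.extendRel_sup hcgb hθ) (hI.extendRel_inf hcga hθ),
      θ.extendRel_coe_iff⟩

theorem latCg_coe_iff (hI : IsInsertion L a b)
    (hcga : ∀ x : L, x < ⟨a, hI.left_mem⟩ → ∀ u v : L, latCg x ⟨a, hI.left_mem⟩ u v)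
    (hcgb : ∀ y : L, (⟨b, hI.right_mem⟩ : L) < y → ∀ u v : L, latCg ⟨b, hI.right_mem⟩ y u v)
    (u v x y : L) : latCg (u : M) v x y ↔ latCg u v x y := by
  refine ⟨fun h θ hθ => ?_, fun h Θ hΘ => h (Θ.comap L.subtype) hΘ⟩
  obtain ⟨Θ, hΘ⟩ := hI.exists_extension hcga hcgb θ
  exact (hΘ x y).1 (h Θ ((hΘ u v).2 hθ))

end IsInsertion

theorem quasiColoring_of_insertion_general {M : Type*} [Lattice M] (a b : M) (L : Sublattice M)
    {H : Type*} (ν : H → H → Prop)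
    (hab : a < b) (haL : a ∈ L) (hbL : b ∈ L)
    (hUnion : ∀ x : M, x ∈ L ∨ x ∈ Set.Icc a b)
    (hcov : ∀ l ∈ L, ¬(a < l ∧ l < b))
    (horder : ∀ k ∈ Set.Icc a b, ∀ l ∈ (L : Set M) \ Set.Icc a b,
      (k ≤ l ↔ b ≤ l ∨ (k = a ∧ a ≤ l)) ∧ (l ≤ k ↔ l ≤ a ∨ (k = b ∧ l ≤ b)))
    (hKsimple : IsSimpleLat ↥(Set.Icc a b))
    (γ : {p : (↥L) × (↥L) // p.1 ≤ p.2} → H)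
    (hγ : IsQuasiColoring ν γ)
    (hcga : ∀ x : ↥L, x < ⟨a, haL⟩ → ∀ u v : ↥L, latCg x ⟨a, haL⟩ u v)
    (hcgb : ∀ y : ↥L, (⟨b, hbL⟩ : ↥L) < y → ∀ u v : ↥L, latCg (⟨b, hbL⟩ : ↥L) y u v)
    (γ' : {p : M × M // p.1 ≤ p.2} → H)
    -- `γ'(x,y) = γ(x,y)` if `x, y ∈ L`:
    (hγ'L : ∀ (x y : M) (hx : x ∈ L) (hy : y ∈ L) (hxy : x ≤ y)
      (hxy' : (⟨x, hx⟩ : ↥L) ≤ ⟨y, hy⟩),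
      γ' ⟨(x, y), hxy⟩ = γ ⟨(⟨x, hx⟩, ⟨y, hy⟩), hxy'⟩)
    -- `γ'(x,x) = γ(a,a)` if `x ∈ K \ L`:
    (hγ'diag : ∀ x : M, x ∈ Set.Icc a b → x ∉ L → ∀ (hxx : x ≤ x)
      (haa : (⟨a, haL⟩ : ↥L) ≤ ⟨a, haL⟩),
      γ' ⟨(x, x), hxx⟩ = γ ⟨(⟨a, haL⟩, ⟨a, haL⟩), haa⟩)
    -- `γ'(x,y) = γ(a,b)` if `x, y ∈ K`, `x ≠ y`, and not both `x, y ∈ L`: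
    (hγ'K : ∀ (x y : M) (hxy : x ≤ y), x ∈ Set.Icc a b → y ∈ Set.Icc a b → x ≠ y →
      ¬(x ∈ L ∧ y ∈ L) → ∀ (hab' : (⟨a, haL⟩ : ↥L) ≤ ⟨b, hbL⟩),
      γ' ⟨(x, y), hxy⟩ = γ ⟨(⟨a, haL⟩, ⟨b, hbL⟩), hab'⟩)
    -- `γ'(x,y) = γ(a,y)` if `x ∈ K \ L` and `y ∈ L \ K`:
    (hγ'up : ∀ (x y : M) (hxy : x ≤ y), x ∈ Set.Icc a b → x ∉ L →
      ∀ (hy : y ∈ L), y ∉ Set.Icc a b → ∀ (hay : (⟨a, haL⟩ : ↥L) ≤ ⟨y, hy⟩),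
      γ' ⟨(x, y), hxy⟩ = γ ⟨(⟨a, haL⟩, ⟨y, hy⟩), hay⟩)
    -- `γ'(x,y) = γ(x,b)` if `x ∈ L \ K` and `y ∈ K \ L`:
    (hγ'dn : ∀ (x y : M) (hxy : x ≤ y) (hx : x ∈ L), x ∉ Set.Icc a b →
      y ∈ Set.Icc a b → y ∉ L → ∀ (hxb : (⟨x, hx⟩ : ↥L) ≤ ⟨b, hbL⟩),
      γ' ⟨(x, y), hxy⟩ = γ ⟨(⟨x, hx⟩, ⟨b, hbL⟩), hxb⟩) :
    IsQuasiColoring ν γ' := by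
  have hI : IsInsertion L a b := ⟨hab, haL, hbL, hUnion, hcov, horder⟩
  have hrepK : ∀ {x y : M} (hxy : x ≤ y), x ∈ Set.Icc a b → y ∈ Set.Icc a b → x ≠ y →
      ¬(x ∈ L ∧ y ∈ L) → ∃ q : {q : L × L // q.1 ≤ q.2},
        γ' ⟨(x, y), hxy⟩ = γ q ∧ latCg x y = latCg (q.1.1 : M) q.1.2 :=
    fun hxy hxK hyK hne hL => ⟨⟨(⟨a, haL⟩, ⟨b, hbL⟩), hab.le⟩, hγ'K _ _ hxy hxK hyK hne hL _,
      latCg_congr fun Θ => Θ.rel_iff_of_isSimpleLat hKsimple hxK hyK hne⟩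
  refine hγ.of_sublattice (hI.latCg_coe_iff hcga hcgb) (fun p => hγ'L _ _ p.1.1.2 p.1.2.2 _ _) ?_
  rintro ⟨⟨x, y⟩, hxy⟩
  by_cases hx : x ∈ L <;> by_cases hy : y ∈ L
  · exact ⟨⟨(⟨x, hx⟩, ⟨y, hy⟩), hxy⟩, hγ'L x y hx hy hxy hxy, rfl⟩
  · have hyK := hI.mem_Ioo_of_not_mem hy
    by_cases hxK : x ∈ Set.Icc a b
    · exact hrepK hxy hxK (Set.Ioo_subset_Icc_self hyK) (ne_of_mem_of_not_mem hx hy) (hy ·.2)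
    have hxa := hI.le_left_of_le hy hx hxy
    exact ⟨⟨(⟨x, hx⟩, ⟨b, hbL⟩), hxa.trans hab.le⟩,
      hγ'dn x y hxy hx hxK (Set.Ioo_subset_Icc_self hyK) hy _,
      latCg_congr (LatCon.rel_iff_of_le_of_mem_Ioc hKsimple hxa (Set.Ioo_subset_Ioc_self hyK))⟩
  · have hxK := hI.mem_Ioo_of_not_mem hx
    by_cases hyK : y ∈ Set.Icc a b
    · exact hrepK hxy (Set.Ioo_subset_Icc_self hxK) hyK (ne_of_mem_of_not_mem hy hx).symm (hx ·.1)
    have hby := hI.right_le_of_le hx hy hxy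
    exact ⟨⟨(⟨a, haL⟩, ⟨y, hy⟩), hab.le.trans hby⟩,
      hγ'up x y hxy (Set.Ioo_subset_Icc_self hxK) hx hy hyK _,
      latCg_congr (LatCon.rel_iff_of_mem_Ico_of_le hKsimple (Set.Ioo_subset_Ico_self hxK) hby)⟩
  · have hxK := Set.Ioo_subset_Icc_self (hI.mem_Ioo_of_not_mem hx)
    by_cases hxy' : x = y
    · subst hxy'
      exact ⟨⟨(⟨a, haL⟩, ⟨a, haL⟩), le_rfl⟩, hγ'diag x hxK hx hxy le_rfl,
        latCg_congr fun Θ => iff_of_true (Θ.refl x) (Θ.refl a)⟩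
    exact hrepK hxy hxK (Set.Ioo_subset_Icc_self (hI.mem_Ioo_of_not_mem hy)) hxy' (hx ·.1)

/-- **Lemma.** (Insertion setup:) `M` is a lattice, `a < b` in `M`, `K = [a,b]` is the
interval of `M`, and `L` is a sublattice of `M` with `M = L ∪ K`, `L ∩ K = {a,b}`,
`b` covering `a` in `L`, and the comparabilities between `K` and `L \ K` as described.
Assume `K` is simple, `(L, ≤; γ; H, ν)` is a quasi-colored lattice, and, in `L`,
`cg(x,a) = ∇` for all `x < a` and `cg(b,y) = ∇` for all `b < y`.  If `γ'` is the
piecewise extension of `γ` described in the five defining equations below, then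
`(M, ≤; γ'; H, ν)` is a quasi-colored lattice. -/
theorem quasiColoring_of_insertion {M : Type*} [Lattice M] (a b : M) (L : Sublattice M)
    {H : Type*} (ν : H → H → Prop) (hr : Reflexive ν) (ht : Transitive ν)
    (hab : a < b) (haL : a ∈ L) (hbL : b ∈ L)
    (hUnion : ∀ x : M, x ∈ L ∨ x ∈ Set.Icc a b)
    (hInter : (L : Set M) ∩ Set.Icc a b = {a, b})
    (hcov : ∀ l ∈ L, ¬(a < l ∧ l < b))
    (horder : ∀ k ∈ Set.Icc a b, ∀ l ∈ (L : Set M) \ Set.Icc a b,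
      (k ≤ l ↔ b ≤ l ∨ (k = a ∧ a ≤ l)) ∧ (l ≤ k ↔ l ≤ a ∨ (k = b ∧ l ≤ b)))
    (hKsimple : IsSimpleLat ↥(Set.Icc a b))
    (γ : {p : (↥L) × (↥L) // p.1 ≤ p.2} → H)
    (hγ : IsQuasiColoring ν γ)
    (hcga : ∀ x : ↥L, x < ⟨a, haL⟩ → ∀ u v : ↥L, latCg x ⟨a, haL⟩ u v)
    (hcgb : ∀ y : ↥L, (⟨b, hbL⟩ : ↥L) < y → ∀ u v : ↥L, latCg (⟨b, hbL⟩ : ↥L) y u v)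
    (γ' : {p : M × M // p.1 ≤ p.2} → H)
    -- `γ'(x,y) = γ(x,y)` if `x, y ∈ L`:
    (hγ'L : ∀ (x y : M) (hx : x ∈ L) (hy : y ∈ L) (hxy : x ≤ y)
      (hxy' : (⟨x, hx⟩ : ↥L) ≤ ⟨y, hy⟩),
      γ' ⟨(x, y), hxy⟩ = γ ⟨(⟨x, hx⟩, ⟨y, hy⟩), hxy'⟩)
    -- `γ'(x,x) = γ(a,a)` if `x ∈ K \ L`:
    (hγ'diag : ∀ x : M, x ∈ Set.Icc a b → x ∉ L → ∀ (hxx : x ≤ x)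
      (haa : (⟨a, haL⟩ : ↥L) ≤ ⟨a, haL⟩),
      γ' ⟨(x, x), hxx⟩ = γ ⟨(⟨a, haL⟩, ⟨a, haL⟩), haa⟩)
    -- `γ'(x,y) = γ(a,b)` if `x, y ∈ K`, `x ≠ y`, and not both `x, y ∈ L`:
    (hγ'K : ∀ (x y : M) (hxy : x ≤ y), x ∈ Set.Icc a b → y ∈ Set.Icc a b → x ≠ y →
      ¬(x ∈ L ∧ y ∈ L) → ∀ (hab' : (⟨a, haL⟩ : ↥L) ≤ ⟨b, hbL⟩),
      γ' ⟨(x, y), hxy⟩ = γ ⟨(⟨a, haL⟩, ⟨b, hbL⟩), hab'⟩)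
    -- `γ'(x,y) = γ(a,y)` if `x ∈ K \ L` and `y ∈ L \ K`:
    (hγ'up : ∀ (x y : M) (hxy : x ≤ y), x ∈ Set.Icc a b → x ∉ L →
      ∀ (hy : y ∈ L), y ∉ Set.Icc a b → ∀ (hay : (⟨a, haL⟩ : ↥L) ≤ ⟨y, hy⟩),
      γ' ⟨(x, y), hxy⟩ = γ ⟨(⟨a, haL⟩, ⟨y, hy⟩), hay⟩)
    -- `γ'(x,y) = γ(x,b)` if `x ∈ L \ K` and `y ∈ K \ L`:
    (hγ'dn : ∀ (x y : M) (hxy : x ≤ y) (hx : x ∈ L), x ∉ Set.Icc a b →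
      y ∈ Set.Icc a b → y ∉ L → ∀ (hxb : (⟨x, hx⟩ : ↥L) ≤ ⟨b, hbL⟩),
      γ' ⟨(x, y), hxy⟩ = γ ⟨(⟨x, hx⟩, ⟨b, hbL⟩), hxb⟩) :
    IsQuasiColoring ν γ' :=
  quasiColoring_of_insertion_general a b L ν hab haL hbL hUnion hcov horder hKsimple γ hγ hcga hcgb
    γ' hγ'L hγ'diag hγ'K hγ'up hγ'dn
end

section
/- Let A be a set with at least 6 elements and let T(A) be the partially ordered set with underlying set {0, 1} ∪ {g_a : a ∈ A} ∪ {g^e : e a 2-element subset of A} (all these elements pairwise distinct), ordered so that 0 is the least element, 1 is the greatest element, the elements g_a are the atoms, the elements g^e are the coatoms, distinct atoms are incomparable, distinct coatoms are incomparable, and g_a < g^e if and only if a ∈ e. Then T(A) is a lattice and it is simple. -/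
/-!
Two distinct atoms lie below exactly one coatom and two distinct coatoms lie above at most one
atom, so two incomparable elements have at most one common upper bound besides `1` and at most
one common lower bound besides `0`; hence `T(A)` is a lattice.

A congruence identifying some `u < v` identifies `0` and `1`. Indeed, one can choose 2-subsets
`e₁`, `e₂` of `A`, disjoint from each other and from the elements of `A` occurring in `u` or in
`v`; this is what six elements are needed for. Then `g^e₁ ⊓ g^e₂ = 0` and `g^e₁ ⊔ g^e₂ = 1`, and
joining or meeting `u ≡ v` with `g^e₁` and `g^e₂` gives `0 ≡ 1`.
-/

section Bounds

variable {α : Type*} [PartialOrder α]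

theorem exists_isLUB_of_isTop {s : Set α} {t : α} (ht : IsTop t)
    (h : (upperBounds s \ {t}).Subsingleton) : ∃ z, IsLUB s z := by
  by_cases hw : ∀ w ∈ upperBounds s, w = t
  · exact ⟨t, fun z _ => ht z, fun w hw' => (hw w hw').ge⟩
  · obtain ⟨w, hw, hwt⟩ := not_forall₂.1 hw
    refine ⟨w, hw, fun w' hw' => ?_⟩
    by_cases hw't : w' = t
    · exact hw't ▸ ht w
    · exact (h ⟨hw, hwt⟩ ⟨hw', hw't⟩).le

theorem exists_isLUB_pair_of_isTop {t : α} (ht : IsTop t)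
    (h : ∀ x y : α, ¬x ≤ y → ¬y ≤ x → (upperBounds {x, y} \ {t}).Subsingleton) (x y : α) :
    ∃ z, IsLUB {x, y} z := by
  by_cases hxy : x ≤ y
  · exact ⟨y, IsGreatest.isLUB ⟨by simp, by simp [hxy]⟩⟩
  by_cases hyx : y ≤ x
  · exact ⟨x, IsGreatest.isLUB ⟨by simp, by simp [hyx]⟩⟩
  exact exists_isLUB_of_isTop ht (h x y hxy hyx)

theorem exists_isGLB_pair_of_isBot {b : α} (hb : IsBot b)
    (h : ∀ x y : α, ¬x ≤ y → ¬y ≤ x → (lowerBounds {x, y} \ {b}).Subsingleton) (x y : α) :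
    ∃ z, IsGLB {x, y} z :=
  exists_isLUB_pair_of_isTop (α := αᵒᵈ) hb (fun x y hxy hyx => h x y hyx hxy) x y

end Bounds

namespace LatCon

variable {L : Type*} [Lattice L] (θ : LatCon L)

theorem rel_inf_sup {x y : L} (h : θ.rel x y) : θ.rel (x ⊓ y) (x ⊔ y) := by
  have hinf : θ.rel (x ⊓ x) (x ⊓ y) := θ.inf (θ.refl x) h
  have hsup : θ.rel (x ⊔ x) (x ⊔ y) := θ.sup (θ.refl x) h
  rw [inf_idem] at hinf
  rw [sup_idem] at hsup
  exact θ.trans (θ.symm hinf) hsup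

theorem rel_of_rel_bot_top {b t : L} (hb : IsBot b) (ht : IsTop t) (h : θ.rel b t) (x y : L) :
    θ.rel x y := by
  have hx : ∀ x, θ.rel x t := fun x => by
    simpa [sup_eq_left.2 (hb x), sup_eq_right.2 (ht x)] using θ.sup (θ.refl x) h
  exact θ.trans (hx x) (θ.symm (hx y))

theorem rel_bot_top_of_rel_bot {b t x y z : L} (hb : IsBot b) (hx : θ.rel b x)
    (hy : x ⊔ y = t) (hz : x ⊔ z = t) (hyz : y ⊓ z = b) : θ.rel b t := by
  have hyt : θ.rel y t := by simpa [sup_eq_right.2 (hb y), hy] using θ.sup hx (θ.refl y)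
  have hzt : θ.rel z t := by simpa [sup_eq_right.2 (hb z), hz] using θ.sup hx (θ.refl z)
  simpa [hyz] using θ.inf hyt hzt

theorem rel_bot_top_of_rel_top {b t x y z : L} (ht : IsTop t) (hx : θ.rel x t)
    (hy : y ⊓ x = b) (hz : z ⊓ x = b) (hyz : y ⊔ z = t) : θ.rel b t := by
  have hby : θ.rel b y := by simpa [inf_eq_left.2 (ht y), hy] using θ.inf (θ.refl y) hx
  have hbz : θ.rel b z := by simpa [inf_eq_left.2 (ht z), hz] using θ.inf (θ.refl z) hx
  simpa [hyz] using θ.sup hby hbz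

end LatCon

theorem isSimpleLat_of_rel_bot_top {L : Type*} [Lattice L] [Nontrivial L] {b t : L}
    (hb : IsBot b) (ht : IsTop t) (h : ∀ (θ : LatCon L) (u v : L), u < v → θ.rel u v → θ.rel b t) :
    IsSimpleLat L := by
  refine ⟨inferInstance, fun θ => ?_⟩
  by_cases hΔ : ∀ x y, θ.rel x y → x = y
  · exact Or.inl fun x y => ⟨hΔ x y, fun hxy => hxy ▸ θ.refl x⟩
  · obtain ⟨x, y, hxy, hne⟩ : ∃ x y, θ.rel x y ∧ x ≠ y := by simpa using hΔ
    exact Or.inr (θ.rel_of_rel_bot_top hb ht (h θ _ _ (inf_lt_sup.2 hne) (θ.rel_inf_sup hxy)))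

theorem Finset.eq_of_card_eq_two_of_mem {A : Type*} {e e' : Finset A} (he : e.card = 2)
    (he' : e'.card = 2) {a b : A} (hab : a ≠ b) (ha : a ∈ e) (hb : b ∈ e) (ha' : a ∈ e')
    (hb' : b ∈ e') : e = e' := by
  classical
  have hpair : ∀ s : Finset A, s.card = 2 → a ∈ s → b ∈ s → s = {a, b} := fun s hs has hbs =>
    (Finset.eq_of_subset_of_card_le (by simp [Finset.insert_subset_iff, has, hbs])
      (by rw [hs, Finset.card_pair hab])).symm
  rw [hpair e he ha hb, hpair e' he' ha' hb']

theorem Finset.exists_two_disjoint_pairs_disjoint {A : Type*} {s t : Finset A}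
    (h : s.card + 4 ≤ t.card) : ∃ e₁ e₂ : {e : Finset A // e.card = 2},
      Disjoint e₁.1 e₂.1 ∧ Disjoint s e₁.1 ∧ Disjoint s e₂.1 := by
  classical
  have h₁ : 4 ≤ (t \ s).card := by have := Finset.le_card_sdiff s t; omega
  obtain ⟨e₁, he₁, hc₁⟩ := Finset.exists_subset_card_eq (show 2 ≤ (t \ s).card by omega)
  have h₂ : 2 ≤ ((t \ s) \ e₁).card := by have := Finset.le_card_sdiff e₁ (t \ s); omega
  obtain ⟨e₂, he₂, hc₂⟩ := Finset.exists_subset_card_eq h₂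
  refine ⟨⟨e₁, hc₁⟩, ⟨e₂, hc₂⟩, Finset.disjoint_of_subset_right he₂ Finset.disjoint_sdiff,
    Finset.disjoint_of_subset_right he₁ Finset.disjoint_sdiff,
    Finset.disjoint_of_subset_right (he₂.trans Finset.sdiff_subset) Finset.disjoint_sdiff⟩

theorem ne_of_disjoint_of_card_eq_two {A : Type*} {e e' : {e : Finset A // e.card = 2}}
    (h : Disjoint e.1 e'.1) : e ≠ e' := by
  rintro rfl
  rw [Finset.disjoint_self_iff_empty] at h
  simpa [h] using e.2

structure IsFruchtPoset {A T : Type*} [PartialOrder T] (zero one : T) (g : A → T)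
    (gc : {e : Finset A // e.card = 2} → T) : Prop where
  atom_injective : Function.Injective g
  coatom_injective : Function.Injective gc
  atom_ne_coatom : ∀ a e, g a ≠ gc e
  atom_ne_zero : ∀ a, g a ≠ zero
  atom_ne_one : ∀ a, g a ≠ one
  coatom_ne_zero : ∀ e, gc e ≠ zero
  coatom_ne_one : ∀ e, gc e ≠ one
  zero_ne_one : zero ≠ one
  cases : ∀ t : T, t = zero ∨ t = one ∨ (∃ a, t = g a) ∨ ∃ e, t = gc e
  le_iff : ∀ x y : T, x ≤ y ↔ (x = zero ∨ y = one ∨ x = y ∨ ∃ a e, x = g a ∧ y = gc e ∧ a ∈ e.1)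

namespace IsFruchtPoset

variable {A T : Type*} {zero one : T} {g : A → T} {gc : {e : Finset A // e.card = 2} → T}
  {x y w : T} {a b : A} {e e' : {e : Finset A // e.card = 2}}

section PartialOrder

variable [PartialOrder T] (hT : IsFruchtPoset zero one g gc)
include hT

theorem isBot_zero : IsBot zero := fun _ => (hT.le_iff _ _).2 (Or.inl rfl)

theorem isTop_one : IsTop one := fun _ => (hT.le_iff _ _).2 (Or.inr (Or.inl rfl))

theorem lt_iff (hx : x ≠ zero) (hy : y ≠ one) :
    x < y ↔ ∃ a e, x = g a ∧ y = gc e ∧ a ∈ e.1 := by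
  constructor
  · intro hxy
    rcases (hT.le_iff x y).1 hxy.le with h | h | h | h
    exacts [absurd h hx, absurd h hy, absurd h hxy.ne, h]
  · rintro ⟨a, e, rfl, rfl, ha⟩
    exact lt_of_le_of_ne ((hT.le_iff _ _).2 (Or.inr (Or.inr (Or.inr ⟨a, e, rfl, rfl, ha⟩))))
      (hT.atom_ne_coatom a e)

theorem atom_le_atom_iff : g a ≤ g b ↔ a = b := by
  refine ⟨fun h => ?_, fun h => h ▸ le_rfl⟩
  rcases (hT.le_iff _ _).1 h with h | h | h | ⟨_, e, _, h, _⟩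
  exacts [absurd h (hT.atom_ne_zero a), absurd h (hT.atom_ne_one b), hT.atom_injective h,
    absurd h (hT.atom_ne_coatom b e)]

theorem atom_le_coatom_iff : g a ≤ gc e ↔ a ∈ e.1 := by
  rw [le_iff_lt_or_eq, hT.lt_iff (hT.atom_ne_zero a) (hT.coatom_ne_one e)]
  constructor
  · rintro (⟨a', e', ha, he, ha'⟩ | h)
    · rwa [hT.atom_injective ha, hT.coatom_injective he]
    · exact absurd h (hT.atom_ne_coatom a e)
  · exact fun ha => Or.inl ⟨a, e, rfl, rfl, ha⟩

theorem coatom_le_coatom_iff : gc e ≤ gc e' ↔ e = e' := by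
  refine ⟨fun h => ?_, fun h => h ▸ le_rfl⟩
  rcases (hT.le_iff _ _).1 h with h | h | h | ⟨a, _, h, _, _⟩
  exacts [absurd h (hT.coatom_ne_zero e), absurd h (hT.coatom_ne_one e'), hT.coatom_injective h,
    absurd h.symm (hT.atom_ne_coatom a e)]

theorem not_coatom_lt (hy : y ≠ one) : ¬gc e < y := by
  rw [hT.lt_iff (hT.coatom_ne_zero e) hy]
  rintro ⟨a, _, h, _, _⟩
  exact hT.atom_ne_coatom a e h.symm

theorem not_lt_atom (hx : x ≠ zero) : ¬x < g a := by
  rw [hT.lt_iff hx (hT.atom_ne_one a)]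
  rintro ⟨_, e, _, h, _⟩
  exact hT.atom_ne_coatom a e h

theorem exists_atoms_coatom_of_mem_upperBounds (hxy : ¬x ≤ y) (hyx : ¬y ≤ x)
    (hw : w ∈ upperBounds {x, y}) (hw1 : w ≠ one) :
    ∃ a b e, x = g a ∧ y = g b ∧ w = gc e ∧ a ∈ e.1 ∧ b ∈ e.1 := by
  have hlt : ∀ {x y}, ¬y ≤ x → x ≤ w → y ≤ w → x < w := fun hyx hxw hyw =>
    lt_of_le_of_ne hxw (by rintro rfl; exact hyx hyw)
  have hx0 : x ≠ zero := by rintro rfl; exact hxy (hT.isBot_zero y)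
  have hy0 : y ≠ zero := by rintro rfl; exact hyx (hT.isBot_zero x)
  obtain ⟨a, e, rfl, rfl, ha⟩ :=
    (hT.lt_iff hx0 hw1).1 (hlt hyx (hw (by simp)) (hw (by simp)))
  obtain ⟨b, e', rfl, he, hb⟩ :=
    (hT.lt_iff hy0 hw1).1 (hlt hxy (hw (by simp)) (hw (by simp)))
  exact ⟨a, b, e, rfl, rfl, rfl, ha, hT.coatom_injective he ▸ hb⟩

theorem exists_atom_coatoms_of_mem_lowerBounds (hxy : ¬x ≤ y) (hyx : ¬y ≤ x)
    (hw : w ∈ lowerBounds {x, y}) (hw0 : w ≠ zero) :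
    ∃ c e e', w = g c ∧ x = gc e ∧ y = gc e' ∧ c ∈ e.1 ∧ c ∈ e'.1 := by
  have hlt : ∀ {x y}, ¬x ≤ y → w ≤ x → w ≤ y → w < x := fun hxy hwx hwy =>
    lt_of_le_of_ne hwx (by rintro rfl; exact hxy hwy)
  have hx1 : x ≠ one := by rintro rfl; exact hyx (hT.isTop_one y)
  have hy1 : y ≠ one := by rintro rfl; exact hxy (hT.isTop_one x)
  obtain ⟨c, e, rfl, rfl, hc⟩ :=
    (hT.lt_iff hw0 hx1).1 (hlt hxy (hw (by simp)) (hw (by simp)))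
  obtain ⟨c', e', hc', rfl, hc'e⟩ :=
    (hT.lt_iff hw0 hy1).1 (hlt hyx (hw (by simp)) (hw (by simp)))
  exact ⟨c, e, e', rfl, rfl, rfl, hc, hT.atom_injective hc' ▸ hc'e⟩

theorem upperBounds_diff_one_subsingleton (hxy : ¬x ≤ y) (hyx : ¬y ≤ x) :
    (upperBounds {x, y} \ {one}).Subsingleton := by
  rintro w ⟨hw, hw1⟩ w' ⟨hw', hw'1⟩
  obtain ⟨a, b, e, rfl, rfl, rfl, ha, hb⟩ :=
    hT.exists_atoms_coatom_of_mem_upperBounds hxy hyx hw hw1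
  obtain ⟨a', b', e', ha', hb', rfl, ha'e, hb'e⟩ :=
    hT.exists_atoms_coatom_of_mem_upperBounds hxy hyx hw' hw'1
  cases hT.atom_injective ha'
  cases hT.atom_injective hb'
  have hab : a ≠ b := by rintro rfl; exact hxy le_rfl
  rw [Subtype.ext (Finset.eq_of_card_eq_two_of_mem e.2 e'.2 hab ha hb ha'e hb'e)]

theorem lowerBounds_diff_zero_subsingleton (hxy : ¬x ≤ y) (hyx : ¬y ≤ x) :
    (lowerBounds {x, y} \ {zero}).Subsingleton := by
  rintro w ⟨hw, hw0⟩ w' ⟨hw', hw'0⟩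
  obtain ⟨c, e, e', rfl, rfl, rfl, hce, hce'⟩ :=
    hT.exists_atom_coatoms_of_mem_lowerBounds hxy hyx hw hw0
  obtain ⟨c', f, f', rfl, hf, hf', hc'f, hc'f'⟩ :=
    hT.exists_atom_coatoms_of_mem_lowerBounds hxy hyx hw' hw'0
  cases hT.coatom_injective hf
  cases hT.coatom_injective hf'
  obtain rfl | hcc' := eq_or_ne c c'
  · rfl
  · exact (hxy (congrArg gc
      (Subtype.ext (Finset.eq_of_card_eq_two_of_mem e.2 e'.2 hcc' hce hc'f hce' hc'f'))).le).elim

noncomputable abbrev lattice : Lattice T :=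
  have hsup := exists_isLUB_pair_of_isTop hT.isTop_one
    fun _ _ => hT.upperBounds_diff_one_subsingleton
  have hinf := exists_isGLB_pair_of_isBot hT.isBot_zero
    fun _ _ => hT.lowerBounds_diff_zero_subsingleton
  Lattice.ofIsLUBofIsGLB _ _ (fun x y => (hsup x y).choose_spec)
    (fun x y => (hinf x y).choose_spec)

end PartialOrder

section Lattice

variable [Lattice T] (hT : IsFruchtPoset zero one g gc)
include hT

theorem sup_coatom_eq_one (h : ¬x ≤ gc e) : x ⊔ gc e = one := by
  by_contra hne
  have heq : gc e = x ⊔ gc e := le_sup_right.eq_of_not_lt (hT.not_coatom_lt hne)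
  exact h (heq ▸ le_sup_left)

theorem inf_atom_eq_zero (h : ¬g a ≤ x) : x ⊓ g a = zero := by
  by_contra hne
  have heq : x ⊓ g a = g a := inf_le_right.eq_of_not_lt (hT.not_lt_atom hne)
  exact h (heq ▸ inf_le_left)

theorem coatom_inf_coatom_eq_zero (h : Disjoint e.1 e'.1) : gc e ⊓ gc e' = zero := by
  by_contra hne
  rcases (inf_le_left : gc e ⊓ gc e' ≤ gc e).lt_or_eq with hlt | heq
  · obtain ⟨c, f, hc, hf, hcf⟩ := (hT.lt_iff hne (hT.coatom_ne_one e)).1 hlt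
    cases hT.coatom_injective hf
    have hce' : c ∈ e'.1 := hT.atom_le_coatom_iff.1 (hc ▸ inf_le_right)
    exact Finset.disjoint_left.1 h hcf hce'
  · have hee' : e = e' := hT.coatom_le_coatom_iff.1 (heq ▸ inf_le_right)
    exact ne_of_disjoint_of_card_eq_two h hee'

variable {θ : LatCon T} {t : Finset A}

theorem rel_zero_one_of_rel_zero_atom (ht : 6 ≤ t.card) (h : θ.rel zero (g a)) :
    θ.rel zero one := by
  obtain ⟨e₁, e₂, h₁₂, ha₁, ha₂⟩ :=
    Finset.exists_two_disjoint_pairs_disjoint (s := {a}) (t := t)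
      (by rw [Finset.card_singleton]; omega)
  rw [Finset.disjoint_singleton_left] at ha₁ ha₂
  exact θ.rel_bot_top_of_rel_bot hT.isBot_zero h
    (hT.sup_coatom_eq_one (mt hT.atom_le_coatom_iff.1 ha₁))
    (hT.sup_coatom_eq_one (mt hT.atom_le_coatom_iff.1 ha₂)) (hT.coatom_inf_coatom_eq_zero h₁₂)

theorem rel_zero_one_of_rel_zero_coatom (ht : 6 ≤ t.card) (h : θ.rel zero (gc e)) :
    θ.rel zero one := by
  obtain ⟨e₁, e₂, h₁₂, he₁, he₂⟩ :=
    Finset.exists_two_disjoint_pairs_disjoint (s := e.1) (t := t) (by rw [e.2]; omega)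
  exact θ.rel_bot_top_of_rel_bot hT.isBot_zero h
    (hT.sup_coatom_eq_one (mt hT.coatom_le_coatom_iff.1 (ne_of_disjoint_of_card_eq_two he₁)))
    (hT.sup_coatom_eq_one (mt hT.coatom_le_coatom_iff.1 (ne_of_disjoint_of_card_eq_two he₂)))
    (hT.coatom_inf_coatom_eq_zero h₁₂)

theorem rel_zero_one_of_rel_atom_one (ht : 6 ≤ t.card) (h : θ.rel (g a) one) :
    θ.rel zero one := by
  obtain ⟨e₁, e₂, h₁₂, ha₁, ha₂⟩ :=
    Finset.exists_two_disjoint_pairs_disjoint (s := {a}) (t := t)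
      (by rw [Finset.card_singleton]; omega)
  rw [Finset.disjoint_singleton_left] at ha₁ ha₂
  exact θ.rel_bot_top_of_rel_top hT.isTop_one h
    (hT.inf_atom_eq_zero (mt hT.atom_le_coatom_iff.1 ha₁))
    (hT.inf_atom_eq_zero (mt hT.atom_le_coatom_iff.1 ha₂))
    (hT.sup_coatom_eq_one (mt hT.coatom_le_coatom_iff.1 (ne_of_disjoint_of_card_eq_two h₁₂)))

theorem rel_zero_one_of_rel_coatom_one (ht : 6 ≤ t.card) (h : θ.rel (gc e) one) :
    θ.rel zero one := by
  obtain ⟨e₁, e₂, h₁₂, he₁, he₂⟩ :=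
    Finset.exists_two_disjoint_pairs_disjoint (s := e.1) (t := t) (by rw [e.2]; omega)
  exact θ.rel_bot_top_of_rel_top hT.isTop_one h
    (hT.coatom_inf_coatom_eq_zero he₁.symm) (hT.coatom_inf_coatom_eq_zero he₂.symm)
    (hT.sup_coatom_eq_one (mt hT.coatom_le_coatom_iff.1 (ne_of_disjoint_of_card_eq_two h₁₂)))

theorem rel_zero_one_of_rel_atom_coatom (ht : 6 ≤ t.card)
    (h : θ.rel (g a) (gc e)) : θ.rel zero one := by
  obtain ⟨b, hb, hba⟩ := Finset.exists_mem_ne (by rw [e.2]; norm_num) a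
  have hb0 := θ.inf (θ.refl (g b)) h
  rw [hT.inf_atom_eq_zero (mt hT.atom_le_atom_iff.1 hba.symm),
    inf_eq_left.2 (hT.atom_le_coatom_iff.2 hb)] at hb0
  exact hT.rel_zero_one_of_rel_zero_atom ht hb0

theorem rel_zero_one_of_lt (ht : 6 ≤ t.card) {u v : T} (huv : u < v) (h : θ.rel u v) :
    θ.rel zero one := by
  by_cases hu : u = zero
  · subst hu
    rcases hT.cases v with rfl | rfl | ⟨a, rfl⟩ | ⟨e, rfl⟩
    exacts [absurd huv (lt_irrefl _), h, hT.rel_zero_one_of_rel_zero_atom ht h,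
      hT.rel_zero_one_of_rel_zero_coatom ht h]
  by_cases hv : v = one
  · subst hv
    rcases hT.cases u with rfl | rfl | ⟨a, rfl⟩ | ⟨e, rfl⟩
    exacts [absurd rfl hu, absurd huv (lt_irrefl _), hT.rel_zero_one_of_rel_atom_one ht h,
      hT.rel_zero_one_of_rel_coatom_one ht h]
  obtain ⟨a, e, rfl, rfl, -⟩ := (hT.lt_iff hu hv).1 huv
  exact hT.rel_zero_one_of_rel_atom_coatom ht h

theorem isSimpleLat (ht : 6 ≤ t.card) : IsSimpleLat T :=
  haveI : Nontrivial T := nontrivial_of_ne zero one hT.zero_ne_one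
  isSimpleLat_of_rel_bot_top hT.isBot_zero hT.isTop_one fun _ _ _ huv h =>
    hT.rel_zero_one_of_lt ht huv h

end Lattice

end IsFruchtPoset

/-- **Lemma.** Let `A` be a set with at least `6` elements and let `T = T(A)` be the
poset with underlying set `{0, 1} ∪ {g_a : a ∈ A} ∪ {g^e : e a 2-element subset of A}`
(all elements pairwise distinct), ordered so that `0` is least, `1` is greatest, the
`g_a` are the atoms, the `g^e` are the coatoms, distinct atoms are incomparable,
distinct coatoms are incomparable, and `g_a < g^e` iff `a ∈ e`.  Then `T(A)` is a
lattice (its partial order extends to a lattice structure) and it is simple. -/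
theorem fruchtPoset_lattice_and_simple {A : Type*} {T : Type*} [po : PartialOrder T]
    (hA : ∃ f : Fin 6 → A, Function.Injective f)
    (zero one : T) (g : A → T) (gc : {e : Finset A // e.card = 2} → T)
    -- all the listed elements are pairwise distinct:
    (hg : Function.Injective g) (hgc : Function.Injective gc)
    (hggc : ∀ a e, g a ≠ gc e)
    (hg0 : ∀ a, g a ≠ zero) (hg1 : ∀ a, g a ≠ one)
    (hgc0 : ∀ e, gc e ≠ zero) (hgc1 : ∀ e, gc e ≠ one)
    (h01 : zero ≠ one)
    -- the underlying set of `T` is exactly `{0, 1} ∪ {g_a} ∪ {g^e}`: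
    (hcover : ∀ t : T, t = zero ∨ t = one ∨ (∃ a, t = g a) ∨ ∃ e, t = gc e)
    -- the order of `T` is as described:
    (hle : ∀ x y : T, x ≤ y ↔
      (x = zero ∨ y = one ∨ x = y ∨ ∃ a e, x = g a ∧ y = gc e ∧ a ∈ e.1)) :
    ∃ inst : Lattice T, inst.toPartialOrder = po ∧ @IsSimpleLat T inst := by
  have hT : IsFruchtPoset zero one g gc :=
    ⟨hg, hgc, hggc, hg0, hg1, hgc0, hgc1, h01, hcover, hle⟩
  obtain ⟨f, hf⟩ := hA
  let _ := hT.lattice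
  exact ⟨hT.lattice, rfl, hT.isSimpleLat (t := Finset.univ.map ⟨f, hf⟩) (by simp)⟩
end

section
/- Let P be a partially ordered set with least element 0 and greatest element 1 where 0 ≠ 1, let V be a set disjoint from P, let (V; E) be a graph on V, let H = P ∪ V, and let ν = {(x,y) ∈ P × P : x ≤ y in P} ∪ (H × ({1} ∪ V)). Let I = {(u,v) ∈ V × V : {u,v} ∈ E} ∪ {(p,q) : p, q ∈ P \ {0,1} and p < q} ∪ ({1} × V). Then ν is the smallest reflexive and transitive relation on H containing I ∪ ({0} × H) ∪ (H × {1}). -/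
/-- On `H = P ⊔ V`, the relation `ν = {(x,y) ∈ P × P : x ≤ y} ∪ (H × ({1} ∪ V))`. -/
def nuRel (P : Type*) [PartialOrder P] [BoundedOrder P] (V : Type*) :
    (P ⊕ V) → (P ⊕ V) → Prop :=
  fun x y => (∃ p q : P, x = Sum.inl p ∧ y = Sum.inl q ∧ p ≤ q) ∨
    (y = Sum.inl (⊤ : P) ∨ ∃ v : V, y = Sum.inr v)

/-- On `H = P ⊔ V`, the relation
`I = {(u,v) ∈ V × V : {u,v} ∈ E} ∪ {(p,q) : p, q ∈ P \ {0,1}, p < q} ∪ ({1} × V)`. -/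
def IRel (P : Type*) [PartialOrder P] [BoundedOrder P] (V : Type*) (E : SimpleGraph V) :
    (P ⊕ V) → (P ⊕ V) → Prop :=
  fun x y => (∃ u v : V, x = Sum.inr u ∧ y = Sum.inr v ∧ E.Adj u v) ∨
    (∃ p q : P, x = Sum.inl p ∧ y = Sum.inl q ∧
      p ≠ ⊥ ∧ p ≠ ⊤ ∧ q ≠ ⊥ ∧ q ≠ ⊤ ∧ p < q) ∨
    (x = Sum.inl (⊤ : P) ∧ ∃ v : V, y = Sum.inr v)

/-- The generating relation `I ∪ ({0} × H) ∪ (H × {1})`. -/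
def baseRel (P : Type*) [PartialOrder P] [BoundedOrder P] (V : Type*) (E : SimpleGraph V) :
    (P ⊕ V) → (P ⊕ V) → Prop :=
  fun x y => IRel P V E x y ∨ x = Sum.inl (⊥ : P) ∨ y = Sum.inl (⊤ : P)

/-!
The relation `ν` is read off constructor by constructor: between points of `P` it is the order,
from a vertex to a point of `P` it only reaches `1`, and everything lies below every vertex.
Reflexivity, transitivity and `baseRel ⊆ ν` are then case checks. For minimality, a strict
`p < q` in `P` is a generator of `I` unless `p = 0` or `q = 1`, and those pairs are in
`{0} × H` or `H × {1}`; finally `x ≤ v` for a vertex `v` factors as `x ≤ 1 ≤ v`.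
-/

theorem baseRel_inl_inl_of_lt {P : Type*} [PartialOrder P] [BoundedOrder P] {V : Type*}
    (E : SimpleGraph V) {p q : P} (hpq : p < q) :
    baseRel P V E (.inl p) (.inl q) := by
  by_cases hp : p = ⊥
  · exact Or.inr (Or.inl (hp ▸ rfl))
  by_cases hq : q = ⊤
  · exact Or.inr (Or.inr (hq ▸ rfl))
  exact Or.inl (Or.inr (Or.inl ⟨p, q, rfl, rfl, hp, (hpq.trans_le le_top).ne, hpq.ne_bot, hq, hpq⟩))

namespace nuRel

variable {P : Type*} [PartialOrder P] [BoundedOrder P] {V : Type*}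

@[simp]
theorem inl_inl {p q : P} : nuRel P V (.inl p) (.inl q) ↔ p ≤ q := by
  refine ⟨?_, fun h => Or.inl ⟨p, q, rfl, rfl, h⟩⟩
  rintro (⟨p', q', hp, hq, h⟩ | hq | ⟨v, hv⟩)
  · cases hp; cases hq; exact h
  · cases hq; exact le_top
  · cases hv

@[simp]
theorem inr_inl {v : V} {q : P} : nuRel P V (.inr v) (.inl q) ↔ q = ⊤ := by
  refine ⟨?_, fun h => Or.inr (Or.inl (h ▸ rfl))⟩
  rintro (⟨p', q', hp, -, -⟩ | hq | ⟨w, hw⟩)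
  · cases hp
  · cases hq; rfl
  · cases hw

@[simp]
theorem to_inr (x : P ⊕ V) (v : V) : nuRel P V x (.inr v) :=
  Or.inr (Or.inr ⟨v, rfl⟩)

theorem to_top (x : P ⊕ V) : nuRel P V x (.inl ⊤) :=
  Or.inr (Or.inl rfl)

theorem refl : Reflexive (nuRel P V) := by
  rintro (p | v) <;> simp

theorem trans : Transitive (nuRel P V) := by
  rintro (a | u) (b | w) (c | z) <;> simp only [inl_inl, inr_inl, to_inr, imp_true_iff]
  · exact le_trans
  · rintro - rfl; exact le_top
  · rintro rfl h; exact top_le_iff.mp h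
  · exact fun _ => id

theorem of_baseRel (E : SimpleGraph V) {x y : P ⊕ V} (h : baseRel P V E x y) : nuRel P V x y := by
  rcases h with (⟨-, v, -, rfl, -⟩ | ⟨p, q, rfl, rfl, -, -, -, -, hpq⟩ | ⟨-, v, rfl⟩) | rfl | rfl
  · exact to_inr _ v
  · exact inl_inl.mpr hpq.le
  · exact to_inr _ v
  · rcases y with q | v <;> simp
  · exact to_top x

theorem le_of_baseRel_le (E : SimpleGraph V) {ρ : P ⊕ V → P ⊕ V → Prop} (hrefl : Reflexive ρ)
    (htrans : Transitive ρ) (hbase : ∀ x y, baseRel P V E x y → ρ x y) :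
    ∀ x y, nuRel P V x y → ρ x y := by
  have below_top : ∀ x, ρ x (.inl ⊤) := fun x => hbase _ _ (Or.inr (Or.inr rfl))
  rintro x (q | v) hxy
  · rcases x with p | v
    · rcases (inl_inl.mp hxy).eq_or_lt with rfl | hpq
      · exact hrefl _
      · exact hbase _ _ (baseRel_inl_inl_of_lt E hpq)
    · rw [inr_inl.mp hxy]; exact below_top _
  · exact htrans (below_top x) (hbase _ _ (Or.inl (Or.inr (Or.inr ⟨rfl, v, rfl⟩))))

end nuRel

theorem nuRel_is_generated_general (P : Type*) [PartialOrder P] [BoundedOrder P]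
    (V : Type*) (E : SimpleGraph V) :
    Reflexive (nuRel P V) ∧ Transitive (nuRel P V) ∧
    (∀ x y, baseRel P V E x y → nuRel P V x y) ∧
    (∀ ρ : (P ⊕ V) → (P ⊕ V) → Prop, Reflexive ρ → Transitive ρ →
      (∀ x y, baseRel P V E x y → ρ x y) → ∀ x y, nuRel P V x y → ρ x y) :=
  ⟨nuRel.refl, nuRel.trans, fun _ _ => nuRel.of_baseRel E,
    fun _ hrefl htrans hbase => nuRel.le_of_baseRel_le E hrefl htrans hbase⟩

/-- **Lemma.** With `P`, `V`, `E`, `H = P ∪ V`, `ν`, and `I` as described, `ν` is the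
smallest reflexive and transitive relation on `H` containing
`I ∪ ({0} × H) ∪ (H × {1})`. -/
theorem nuRel_is_generated (P : Type*) [PartialOrder P] [BoundedOrder P]
    (V : Type*) [Nonempty V] (E : SimpleGraph V) (h01 : (⊥ : P) ≠ ⊤) :
    Reflexive (nuRel P V) ∧ Transitive (nuRel P V) ∧
    (∀ x y, baseRel P V E x y → nuRel P V x y) ∧
    (∀ ρ : (P ⊕ V) → (P ⊕ V) → Prop, Reflexive ρ → Transitive ρ →
      (∀ x y, baseRel P V E x y → ρ x y) → ∀ x y, nuRel P V x y → ρ x y) :=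
  nuRel_is_generated_general P V E
end

section
/- Let M be a lattice and let A and B be sublattices of M with A ∪ B = M such that A is downward closed in M, B is upward closed in M, the intersection A ∩ B contains at least two elements, and for all x ∈ A \ B and y ∈ B \ A with x ≤ y there exists m ∈ A ∩ B with x ≤ m ≤ y. If A and B (with the induced lattice structures) are simple lattices, then M is a simple lattice. -/
/-!
Any two comparable elements `u ≤ v` of `M` lie both in `A`, both in `B`, or are bridged by some
`m ∈ A ∩ B` with `u ≤ m ≤ v`. Congruence classes are convex, so on comparable pairs a congruence
of `M` is controlled by its restrictions to `A` and `B`; these are `Δ` or `∇` by simplicity, and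
two distinct elements of `A ∩ B` force them to be the same one.
-/

def LatCon.restrict {M : Type*} [Lattice M] (θ : LatCon M) (S : Sublattice M) :
    LatCon ↥S where
  rel a b := θ.rel a b
  refl a := θ.refl a
  symm h := θ.symm h
  trans h₁ h₂ := θ.trans h₁ h₂
  sup h₁ h₂ := θ.sup h₁ h₂
  inf h₁ h₂ := θ.inf h₁ h₂

namespace LatCon

variable {L : Type*} [Lattice L] (θ : LatCon L)

theorem rel_of_rel_of_mem_Icc {u m v : L} (h : θ.rel u v) (hm : m ∈ Set.Icc u v) :
    θ.rel u m ∧ θ.rel m v := by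
  have hinf := θ.inf h (θ.refl m)
  have hsup := θ.sup h (θ.refl m)
  rw [inf_eq_left.mpr hm.1, inf_eq_right.mpr hm.2] at hinf
  rw [sup_eq_right.mpr hm.1, sup_eq_left.mpr hm.2] at hsup
  exact ⟨hinf, hsup⟩

theorem rel_iff_eq_of_le (h : ∀ u v, u ≤ v → θ.rel u v → u = v) (x y : L) :
    θ.rel x y ↔ x = y := by
  refine ⟨fun hxy => ?_, fun hxy => hxy ▸ θ.refl x⟩
  have hx : x ⊓ y = x :=
    h _ _ inf_le_left (θ.symm (by simpa only [inf_idem] using θ.inf (θ.refl x) hxy))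
  have hy : x ⊓ y = y := h _ _ inf_le_right (by simpa only [inf_idem] using θ.inf hxy (θ.refl y))
  exact hx.symm.trans hy

theorem rel_of_le (h : ∀ u v, u ≤ v → θ.rel u v) (x y : L) : θ.rel x y :=
  θ.trans (h x (x ⊔ y) le_sup_left) (θ.symm (h y (x ⊔ y) le_sup_right))

theorem eq_of_rel_of_mem {S : Sublattice L} (hS : ∀ a b, (θ.restrict S).rel a b ↔ a = b)
    {u v : L} (hu : u ∈ S) (hv : v ∈ S) (huv : θ.rel u v) : u = v :=
  congrArg Subtype.val ((hS ⟨u, hu⟩ ⟨v, hv⟩).mp huv)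

end LatCon

theorem forall_le_of_gluing {M : Type*} [LE M] {A B : Set M} (P : M → M → Prop)
    (hUnion : ∀ x, x ∈ A ∨ x ∈ B) (hA : IsLowerSet A)
    (hMid : ∀ x ∈ A \ B, ∀ y ∈ B \ A, x ≤ y → ∃ m : M, m ∈ A ∧ m ∈ B ∧ x ≤ m ∧ m ≤ y)
    (hPA : ∀ u ∈ A, ∀ v ∈ A, u ≤ v → P u v) (hPB : ∀ u ∈ B, ∀ v ∈ B, u ≤ v → P u v)
    (hP : ∀ u m v, u ≤ m → m ≤ v → P u m → P m v → P u v) {u v : M} (huv : u ≤ v) :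
    P u v := by
  by_cases hvA : v ∈ A
  · exact hPA u (hA huv hvA) v hvA huv
  have hvB : v ∈ B := (hUnion v).resolve_left hvA
  by_cases huB : u ∈ B
  · exact hPB u huB v hvB huv
  have huA : u ∈ A := (hUnion u).resolve_right huB
  obtain ⟨m, hmA, hmB, hum, hmv⟩ := hMid u ⟨huA, huB⟩ v ⟨hvB, hvA⟩ huv
  exact hP u m v hum hmv (hPA u huA m hmA hum) (hPB m hmB v hvB hmv)

theorem simple_of_gluing_general {M : Type*} [Lattice M] (A B : Sublattice M)
    (hUnion : ∀ x : M, x ∈ A ∨ x ∈ B)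
    (hA : IsLowerSet (A : Set M))
    (hInter : ∃ x y : M, x ∈ A ∧ x ∈ B ∧ y ∈ A ∧ y ∈ B ∧ x ≠ y)
    (hMid : ∀ x ∈ (A : Set M) \ B, ∀ y ∈ (B : Set M) \ A, x ≤ y →
      ∃ m : M, m ∈ A ∧ m ∈ B ∧ x ≤ m ∧ m ≤ y)
    (hAs : IsSimpleLat ↥A) (hBs : IsSimpleLat ↥B) :
    IsSimpleLat M := by
  obtain ⟨p, q, hpA, hpB, hqA, hqB, hpq⟩ := hInter
  refine ⟨⟨p, q, hpq⟩, fun θ => ?_⟩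
  rcases hAs.2 (θ.restrict A) with hEqA | hAllA <;> rcases hBs.2 (θ.restrict B) with hEqB | hAllB
  · refine .inl (θ.rel_iff_eq_of_le fun u v => forall_le_of_gluing (fun u v => θ.rel u v → u = v)
      hUnion hA hMid ?_ ?_ ?_)
    · exact fun u hu v hv _ => θ.eq_of_rel_of_mem hEqA hu hv
    · exact fun u hu v hv _ => θ.eq_of_rel_of_mem hEqB hu hv
    · intro u m v hum hmv hum' hmv' h
      obtain ⟨h₁, h₂⟩ := θ.rel_of_rel_of_mem_Icc h ⟨hum, hmv⟩
      exact (hum' h₁).trans (hmv' h₂)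
  · exact absurd (θ.eq_of_rel_of_mem hEqA hpA hqA (hAllB ⟨p, hpB⟩ ⟨q, hqB⟩)) hpq
  · exact absurd (θ.eq_of_rel_of_mem hEqB hpB hqB (hAllA ⟨p, hpA⟩ ⟨q, hqA⟩)) hpq
  · exact .inr (θ.rel_of_le fun u v => forall_le_of_gluing θ.rel hUnion hA hMid
      (fun u hu v hv _ => hAllA ⟨u, hu⟩ ⟨v, hv⟩) (fun u hu v hv _ => hAllB ⟨u, hu⟩ ⟨v, hv⟩)
      (fun _ _ _ _ _ => θ.trans))

/-- **Lemma (Hall–Dilworth gluing).** Let `M` be a lattice and `A`, `B` sublattices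
with `A ∪ B = M`, `A` downward closed, `B` upward closed, `A ∩ B` containing at least
two elements, and such that for all `x ∈ A \ B` and `y ∈ B \ A` with `x ≤ y` there is
`m ∈ A ∩ B` with `x ≤ m ≤ y`.  If `A` and `B` are simple lattices, then so is `M`. -/
theorem simple_of_gluing {M : Type*} [Lattice M] (A B : Sublattice M)
    (hUnion : ∀ x : M, x ∈ A ∨ x ∈ B)
    (hA : IsLowerSet (A : Set M)) (hB : IsUpperSet (B : Set M))
    (hInter : ∃ x y : M, x ∈ A ∧ x ∈ B ∧ y ∈ A ∧ y ∈ B ∧ x ≠ y)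
    (hMid : ∀ x ∈ (A : Set M) \ B, ∀ y ∈ (B : Set M) \ A, x ≤ y →
      ∃ m : M, m ∈ A ∧ m ∈ B ∧ x ≤ m ∧ m ≤ y)
    (hAs : IsSimpleLat ↥A) (hBs : IsSimpleLat ↥B) :
    IsSimpleLat M :=
  simple_of_gluing_general A B hUnion hA hInter hMid hAs hBs
end
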